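/- arXiv:2009.14106 — 4 statements merged into one kernel-verified Lean document; each statement's English description precedes it below -/
import Mathlib

section
/- Let d ≥ 1 and let M ⊆ [0,1]^d be a meager set. Then the set of f ∈ Homeo([0,1]^d) with λ^d(f(M)) = 0 is comeager in Homeo([0,1]^d). Consequently, since there exists a meager set of full Lebesgue measure, the generic homeomorphism of [0,1]^d is singular. -/
open MeasureTheory Metric Set Filter Topology

/-- The unit cube `[0,1]^d` in Euclidean space. -/
def cube (d : ℕ) : Set (EuclideanSpace ℝ (Fin d)) := {x | ∀ i, x i ∈ Icc (0 : ℝ) 1}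

/-- The space of homeomorphisms of the cube `[0,1]^d`, as a subspace of the
space of continuous self-maps of the cube (with the uniform topology). -/
def HomeoCube (d : ℕ) : Type := {g : C(↥(cube d), ↥(cube d)) // IsHomeomorph g}

noncomputable instance (d : ℕ) : TopologicalSpace (HomeoCube d) :=
  instTopologicalSpaceSubtype

namespace Sq

variable {s₀ η t u : ℝ}

/-- profile function: 0↦0, s₀↦1-η, 1↦1, identity beyond 1. -/
noncomputable def psi (s₀ η t : ℝ) : ℝ :=
  max t (min ((1 - η) / s₀ * t) (1 - η + η / (1 - s₀) * (t - s₀)))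

noncomputable def phi (s₀ η u : ℝ) : ℝ :=
  min u (max (s₀ / (1 - η) * u) (s₀ + (1 - s₀) / η * (u - (1 - η))))

noncomputable def rho (s₀ η t : ℝ) : ℝ := psi s₀ η (max t s₀) / max t s₀

noncomputable def rho' (s₀ η u : ℝ) : ℝ := phi s₀ η (max u (1 - η)) / max u (1 - η)

section
variable (h0 : 0 < s₀) (hη : 0 < η) (h1 : s₀ < 1 - η)

include h0 hη h1

lemma params : ∃ a b a' b' : ℝ, (1-η)/s₀ = a ∧ η/(1-s₀) = b ∧ s₀/(1-η) = a' ∧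
    (1-s₀)/η = b' ∧ s₀*a = 1-η ∧ (1-s₀)*b = η ∧ (1-η)*a' = s₀ ∧ η*b' = 1-s₀ ∧
    a*a' = 1 ∧ b*b' = 1 ∧ 0<a ∧ 0<b ∧ 0<a' ∧ 0<b' ∧ 1<a ∧ b<1 ∧ a'<1 ∧ 1<b' ∧ b<a := by
  have hs1 : (0:ℝ) < 1 - s₀ := by linarith
  have hη1 : (0:ℝ) < 1 - η := by linarith
  refine ⟨(1-η)/s₀, η/(1-s₀), s₀/(1-η), (1-s₀)/η, rfl, rfl, rfl, rfl,
    by field_simp, by field_simp, by field_simp, by field_simp,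
    by field_simp, by field_simp,
    by positivity, by positivity, by positivity, by positivity,
    ?_, ?_, ?_, ?_, ?_⟩
  · rw [lt_div_iff₀ h0]; linarith
  · rw [div_lt_one hs1]; linarith
  · rw [div_lt_one hη1]; linarith
  · rw [lt_div_iff₀ hη]; linarith
  · rw [div_lt_div_iff₀ hs1 h0]; nlinarith

lemma psi_of_le (ht0 : 0 ≤ t) (ht : t ≤ s₀) : psi s₀ η t = (1 - η) / s₀ * t := by
  obtain ⟨a,b,a',b',hae,hbe,ha'e,hb'e,ha,hb,ha',hb',haa,hbb,ha0,hb0,ha'0,hb'0,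
    ha1,hb1,ha'1,hb'1,hba⟩ := params h0 hη h1
  simp only [psi, hae, hbe]
  rw [min_eq_left, max_eq_right]
  · nlinarith
  · nlinarith [mul_nonneg (sub_nonneg.2 ht) (sub_nonneg.2 hba.le)]

lemma psi_of_mid (ht0 : s₀ ≤ t) (ht : t ≤ 1) :
    psi s₀ η t = 1 - η + η / (1 - s₀) * (t - s₀) := by
  obtain ⟨a,b,a',b',hae,hbe,ha'e,hb'e,ha,hb,ha',hb',haa,hbb,ha0,hb0,ha'0,hb'0,
    ha1,hb1,ha'1,hb'1,hba⟩ := params h0 hη h1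
  simp only [psi, hae, hbe]
  rw [min_eq_right, max_eq_right]
  · nlinarith [mul_nonneg (sub_nonneg.2 ht0) (sub_nonneg.2 hb1.le)]
  · nlinarith [mul_nonneg (sub_nonneg.2 ht0) (sub_nonneg.2 hba.le)]

lemma psi_of_ge1 (ht : 1 ≤ t) : psi s₀ η t = t := by
  obtain ⟨a,b,a',b',hae,hbe,ha'e,hb'e,ha,hb,ha',hb',haa,hbb,ha0,hb0,ha'0,hb'0,
    ha1,hb1,ha'1,hb'1,hba⟩ := params h0 hη h1
  simp only [psi, hae, hbe]
  rw [max_eq_left]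
  refine le_trans (min_le_right _ _) ?_
  nlinarith [mul_nonneg (sub_nonneg.2 ht) (sub_nonneg.2 hb1.le)]

lemma phi_of_le (hu0 : 0 ≤ u) (hu : u ≤ 1 - η) : phi s₀ η u = s₀ / (1 - η) * u := by
  obtain ⟨a,b,a',b',hae,hbe,ha'e,hb'e,ha,hb,ha',hb',haa,hbb,ha0,hb0,ha'0,hb'0,
    ha1,hb1,ha'1,hb'1,hba⟩ := params h0 hη h1
  simp only [phi, ha'e, hb'e]
  rw [max_eq_left, min_eq_right]
  · nlinarith
  · nlinarith [mul_nonneg (sub_nonneg.2 hu) (sub_nonneg.2 (le_of_lt (lt_of_lt_of_le ha'1 hb'1.le) : a' ≤ b'))]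

lemma phi_of_mid (hu0 : 1 - η ≤ u) (hu : u ≤ 1) :
    phi s₀ η u = s₀ + (1 - s₀) / η * (u - (1 - η)) := by
  obtain ⟨a,b,a',b',hae,hbe,ha'e,hb'e,ha,hb,ha',hb',haa,hbb,ha0,hb0,ha'0,hb'0,
    ha1,hb1,ha'1,hb'1,hba⟩ := params h0 hη h1
  simp only [phi, ha'e, hb'e]
  rw [max_eq_right, min_eq_right]
  · nlinarith [mul_nonneg (sub_nonneg.2 hu0) (sub_nonneg.2 hb'1.le)]
  · nlinarith [mul_nonneg (sub_nonneg.2 hu0) (sub_nonneg.2 (le_of_lt (lt_of_lt_of_le ha'1 hb'1.le) : a' ≤ b'))]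

lemma phi_of_ge1 (hu : 1 ≤ u) : phi s₀ η u = u := by
  obtain ⟨a,b,a',b',hae,hbe,ha'e,hb'e,ha,hb,ha',hb',haa,hbb,ha0,hb0,ha'0,hb'0,
    ha1,hb1,ha'1,hb'1,hba⟩ := params h0 hη h1
  simp only [phi, ha'e, hb'e]
  rw [min_eq_left]
  refine le_trans ?_ (le_max_right _ _)
  nlinarith [mul_nonneg (sub_nonneg.2 hu) (sub_nonneg.2 hb'1.le)]

lemma psi_le_one (ht0 : 0 ≤ t) (ht : t ≤ 1) : psi s₀ η t ≤ 1 := by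
  obtain ⟨a,b,a',b',hae,hbe,ha'e,hb'e,ha,hb,ha',hb',haa,hbb,ha0,hb0,ha'0,hb'0,
    ha1,hb1,ha'1,hb'1,hba⟩ := params h0 hη h1
  rcases le_total t s₀ with h | h
  · rw [psi_of_le h0 hη h1 ht0 h, hae]; nlinarith
  · rw [psi_of_mid h0 hη h1 h ht, hbe]; nlinarith

lemma psi_ge (ht : s₀ ≤ t) : 1 - η ≤ psi s₀ η t := by
  obtain ⟨a,b,a',b',hae,hbe,ha'e,hb'e,ha,hb,ha',hb',haa,hbb,ha0,hb0,ha'0,hb'0,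
    ha1,hb1,ha'1,hb'1,hba⟩ := params h0 hη h1
  rcases le_total t 1 with h | h
  · rw [psi_of_mid h0 hη h1 ht h, hbe]; nlinarith [mul_nonneg (sub_nonneg.2 ht) hb0.le]
  · rw [psi_of_ge1 h0 hη h1 h]; linarith

omit h0 hη h1 in
lemma psi_nonneg (ht0 : 0 ≤ t) : 0 ≤ psi s₀ η t := le_trans ht0 (le_max_left _ _)

omit h0 hη h1 in
lemma phi_le_self : phi s₀ η u ≤ u := min_le_left _ _

lemma phi_nonneg (hu0 : 0 ≤ u) : 0 ≤ phi s₀ η u := by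
  obtain ⟨a,b,a',b',hae,hbe,ha'e,hb'e,ha,hb,ha',hb',haa,hbb,ha0,hb0,ha'0,hb'0,
    ha1,hb1,ha'1,hb'1,hba⟩ := params h0 hη h1
  rcases le_total u (1 - η) with h | h
  · rw [phi_of_le h0 hη h1 hu0 h, ha'e]; nlinarith
  · rcases le_total u 1 with h' | h'
    · rw [phi_of_mid h0 hη h1 h h', hb'e]; nlinarith [mul_nonneg (sub_nonneg.2 h) hb'0.le]
    · rw [phi_of_ge1 h0 hη h1 h']; linarith

lemma phi_ge (hu : 1 - η ≤ u) : s₀ ≤ phi s₀ η u := by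
  obtain ⟨a,b,a',b',hae,hbe,ha'e,hb'e,ha,hb,ha',hb',haa,hbb,ha0,hb0,ha'0,hb'0,
    ha1,hb1,ha'1,hb'1,hba⟩ := params h0 hη h1
  rcases le_total u 1 with h' | h'
  · rw [phi_of_mid h0 hη h1 hu h', hb'e]; nlinarith [mul_nonneg (sub_nonneg.2 hu) hb'0.le]
  · rw [phi_of_ge1 h0 hη h1 h']; linarith

lemma psi_le_eta (ht0 : 0 ≤ t) (ht : t ≤ s₀) : psi s₀ η t ≤ 1 - η := by
  obtain ⟨a,b,a',b',hae,hbe,ha'e,hb'e,ha,hb,ha',hb',haa,hbb,ha0,hb0,ha'0,hb'0,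
    ha1,hb1,ha'1,hb'1,hba⟩ := params h0 hη h1
  rw [psi_of_le h0 hη h1 ht0 ht, hae]; nlinarith

lemma phi_le_s0 (hu0 : 0 ≤ u) (hu : u ≤ 1 - η) : phi s₀ η u ≤ s₀ := by
  obtain ⟨a,b,a',b',hae,hbe,ha'e,hb'e,ha,hb,ha',hb',haa,hbb,ha0,hb0,ha'0,hb'0,
    ha1,hb1,ha'1,hb'1,hba⟩ := params h0 hη h1
  rw [phi_of_le h0 hη h1 hu0 hu, ha'e]; nlinarith

lemma phi_psi (ht0 : 0 ≤ t) : phi s₀ η (psi s₀ η t) = t := by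
  obtain ⟨a,b,a',b',hae,hbe,ha'e,hb'e,ha,hb,ha',hb',haa,hbb,ha0,hb0,ha'0,hb'0,
    ha1,hb1,ha'1,hb'1,hba⟩ := params h0 hη h1
  rcases le_total t s₀ with h | h
  · rw [psi_of_le h0 hη h1 ht0 h,
      phi_of_le h0 hη h1 (by rw [hae]; positivity)
        (by rw [← psi_of_le h0 hη h1 ht0 h]; exact psi_le_eta h0 hη h1 ht0 h),
      hae, ha'e]
    nlinarith
  · rcases le_total t 1 with h' | h'
    · have hge : 1 - η ≤ psi s₀ η t := psi_ge h0 hη h1 h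
      have hle : psi s₀ η t ≤ 1 := psi_le_one h0 hη h1 (by linarith) h'
      rw [psi_of_mid h0 hη h1 h h'] at hge hle ⊢
      rw [phi_of_mid h0 hη h1 hge hle, hbe, hb'e]
      nlinarith
    · rw [psi_of_ge1 h0 hη h1 h', phi_of_ge1 h0 hη h1 h']

lemma psi_phi (hu0 : 0 ≤ u) : psi s₀ η (phi s₀ η u) = u := by
  obtain ⟨a,b,a',b',hae,hbe,ha'e,hb'e,ha,hb,ha',hb',haa,hbb,ha0,hb0,ha'0,hb'0,
    ha1,hb1,ha'1,hb'1,hba⟩ := params h0 hη h1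
  rcases le_total u (1 - η) with h | h
  · rw [phi_of_le h0 hη h1 hu0 h,
      psi_of_le h0 hη h1 (by rw [ha'e]; positivity)
        (by rw [← phi_of_le h0 hη h1 hu0 h]; exact phi_le_s0 h0 hη h1 hu0 h),
      hae, ha'e]
    nlinarith
  · rcases le_total u 1 with h' | h'
    · have hge : s₀ ≤ phi s₀ η u := phi_ge h0 hη h1 h
      have hle : phi s₀ η u ≤ 1 := le_trans (phi_le_self) h'
      rw [phi_of_mid h0 hη h1 h h'] at hge hle ⊢
      rw [psi_of_mid h0 hη h1 hge hle, hbe, hb'e]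
      nlinarith
    · rw [phi_of_ge1 h0 hη h1 h', psi_of_ge1 h0 hη h1 h']

lemma rho_mul (ht0 : 0 ≤ t) : rho s₀ η t * t = psi s₀ η t := by
  rcases le_total t s₀ with h | h
  · rw [rho, max_eq_right h, psi_of_le h0 hη h1 ht0 h,
      psi_of_le h0 hη h1 h0.le le_rfl]
    field_simp
  · rw [rho, max_eq_left h, div_mul_cancel₀]
    exact ne_of_gt (lt_of_lt_of_le h0 h)

lemma rho'_mul (hu0 : 0 ≤ u) : rho' s₀ η u * u = phi s₀ η u := by
  have hη1 : (0:ℝ) < 1 - η := by linarith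
  rcases le_total u (1 - η) with h | h
  · rw [rho', max_eq_right h, phi_of_le h0 hη h1 hu0 h,
      phi_of_le h0 hη h1 hη1.le le_rfl]
    field_simp
  · rw [rho', max_eq_left h, div_mul_cancel₀]
    exact ne_of_gt (lt_of_lt_of_le hη1 h)

omit hη h1 in
lemma rho_nonneg : 0 ≤ rho s₀ η t := by
  rw [rho]
  have h2 : (0:ℝ) < max t s₀ := lt_of_lt_of_le h0 (le_max_right _ _)
  exact div_nonneg (psi_nonneg h2.le) h2.le

lemma rho'_nonneg : 0 ≤ rho' s₀ η u := by
  have hη1 : (0:ℝ) < 1 - η := by linarith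
  rw [rho']
  have h2 : (0:ℝ) < max u (1 - η) := lt_of_lt_of_le hη1 (le_max_right _ _)
  exact div_nonneg (phi_nonneg h0 hη h1 h2.le) h2.le

lemma rho_of_ge1 (ht : 1 ≤ t) : rho s₀ η t = 1 := by
  have h2 : max t s₀ = t := max_eq_left (le_trans (by linarith) ht)
  rw [rho, h2, psi_of_ge1 h0 hη h1 ht, div_self (by linarith)]

lemma rho'_of_ge1 (hu : 1 ≤ u) : rho' s₀ η u = 1 := by
  have h2 : max u (1-η) = u := max_eq_left (le_trans (by linarith) hu)
  rw [rho', h2, phi_of_ge1 h0 hη h1 hu, div_self (by linarith)]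

lemma rho'_psi_mul_rho (ht0 : 0 ≤ t) : rho' s₀ η (psi s₀ η t) * rho s₀ η t = 1 := by
  have hη1 : (0:ℝ) < 1 - η := by linarith
  have key : phi s₀ η (psi s₀ η t) = t := phi_psi h0 hη h1 ht0
  rcases le_total t s₀ with h | h
  · have hps : psi s₀ η t ≤ 1 - η := psi_le_eta h0 hη h1 ht0 h
    have h2 : rho' s₀ η (psi s₀ η t) = phi s₀ η (1-η) / (1-η) := by
      rw [rho', max_eq_right hps]
    have h3 : rho s₀ η t = psi s₀ η s₀ / s₀ := by rw [rho, max_eq_right h]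
    rw [h2, h3, phi_of_le h0 hη h1 hη1.le le_rfl, psi_of_le h0 hη h1 h0.le le_rfl]
    field_simp
  · have hps : 1 - η ≤ psi s₀ η t := psi_ge h0 hη h1 h
    have hpsipos : 0 < psi s₀ η t := by linarith
    have htpos : 0 < t := lt_of_lt_of_le h0 h
    rw [rho', max_eq_left hps, rho, max_eq_left h, key]
    field_simp

lemma rho_phi_mul_rho' (hu0 : 0 ≤ u) : rho s₀ η (phi s₀ η u) * rho' s₀ η u = 1 := by
  have hη1 : (0:ℝ) < 1 - η := by linarith
  have key : psi s₀ η (phi s₀ η u) = u := psi_phi h0 hη h1 hu0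
  rcases le_total u (1 - η) with h | h
  · have hph : phi s₀ η u ≤ s₀ := phi_le_s0 h0 hη h1 hu0 h
    have h2 : rho s₀ η (phi s₀ η u) = psi s₀ η s₀ / s₀ := by
      rw [rho, max_eq_right hph]
    rw [h2, rho', max_eq_right h, psi_of_le h0 hη h1 h0.le le_rfl,
      phi_of_le h0 hη h1 hη1.le le_rfl]
    field_simp
  · have hph : s₀ ≤ phi s₀ η u := phi_ge h0 hη h1 h
    have hupos : 0 < u := by linarith
    have hphpos : 0 < phi s₀ η u := lt_of_lt_of_le h0 hph
    rw [rho, max_eq_left hph, rho', max_eq_left h, key]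
    field_simp

omit hη h1 in
lemma continuous_rho : Continuous (rho s₀ η) := by
  have hmax : Continuous fun t : ℝ => max t s₀ := continuous_id.max continuous_const
  have hpsi : Continuous (psi s₀ η) := by
    unfold psi
    fun_prop
  exact (hpsi.comp hmax).div hmax fun t => ne_of_gt (lt_of_lt_of_le h0 (le_max_right _ _))

omit h0 hη h1 in
lemma continuous_rho' (hη1 : η < 1) : Continuous (rho' s₀ η) := by
  have hη1' : (0:ℝ) < 1 - η := by linarith
  have hmax : Continuous fun u : ℝ => max u (1 - η) := continuous_id.max continuous_const
  have hphi : Continuous (phi s₀ η) := by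
    unfold phi
    fun_prop
  exact (hphi.comp hmax).div hmax fun u => ne_of_gt (lt_of_lt_of_le hη1' (le_max_right _ _))

end

section Radial
variable {E : Type*} [NormedAddCommGroup E] [NormedSpace ℝ E]
variable {s : Set E} {p : E} {s₀ η : ℝ}

/-- The radial squeeze map associated to a convex body `p + s`. -/
noncomputable def radial (s : Set E) (p : E) (s₀ η : ℝ) (x : E) : E :=
  p + rho s₀ η (gauge s (x - p)) • (x - p)

noncomputable def radial' (s : Set E) (p : E) (s₀ η : ℝ) (y : E) : E :=
  p + rho' s₀ η (gauge s (y - p)) • (y - p)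

variable (h0 : 0 < s₀) (hη : 0 < η) (h1 : s₀ < 1 - η)
variable (hconv : Convex ℝ s) (hs0 : s ∈ 𝓝 0)

include h0 hη h1 in
lemma gauge_radial (x : E) :
    gauge s (radial s p s₀ η x - p) = psi s₀ η (gauge s (x - p)) := by
  have h2 : radial s p s₀ η x - p = rho s₀ η (gauge s (x - p)) • (x - p) := by
    rw [radial]; abel
  rw [h2, gauge_smul_of_nonneg (rho_nonneg h0), smul_eq_mul,
    rho_mul h0 hη h1 (gauge_nonneg _)]

include h0 hη h1 in
lemma gauge_radial' (y : E) :
    gauge s (radial' s p s₀ η y - p) = phi s₀ η (gauge s (y - p)) := by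
  have h2 : radial' s p s₀ η y - p = rho' s₀ η (gauge s (y - p)) • (y - p) := by
    rw [radial']; abel
  rw [h2, gauge_smul_of_nonneg (rho'_nonneg h0 hη h1), smul_eq_mul,
    rho'_mul h0 hη h1 (gauge_nonneg _)]

include h0 hη h1 in
lemma radial'_radial (x : E) : radial' s p s₀ η (radial s p s₀ η x) = x := by
  have h2 : radial s p s₀ η x - p = rho s₀ η (gauge s (x - p)) • (x - p) := by
    rw [radial]; abel
  rw [radial', gauge_radial h0 hη h1, h2, smul_smul,
    rho'_psi_mul_rho h0 hη h1 (gauge_nonneg _), one_smul]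
  abel

include h0 hη h1 in
lemma radial_radial' (y : E) : radial s p s₀ η (radial' s p s₀ η y) = y := by
  have h2 : radial' s p s₀ η y - p = rho' s₀ η (gauge s (y - p)) • (y - p) := by
    rw [radial']; abel
  rw [radial, gauge_radial' h0 hη h1, h2, smul_smul,
    rho_phi_mul_rho' h0 hη h1 (gauge_nonneg _), one_smul]
  abel

include h0 hη h1 in
lemma radial_of_one_le (x : E) (hx : 1 ≤ gauge s (x - p)) : radial s p s₀ η x = x := by
  rw [radial, rho_of_ge1 h0 hη h1 hx, one_smul]; abel

include h0 hη h1 in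
lemma radial'_of_one_le (y : E) (hy : 1 ≤ gauge s (y - p)) : radial' s p s₀ η y = y := by
  rw [radial', rho'_of_ge1 h0 hη h1 hy, one_smul]; abel

include h0 hη h1 hconv hs0 in
lemma continuous_radial : Continuous (radial s p s₀ η) := by
  have hg : Continuous fun x : E => gauge s (x - p) :=
    (continuous_gauge hconv hs0).comp (continuous_id.sub continuous_const)
  exact continuous_const.add (((continuous_rho h0).comp hg).smul
    (continuous_id.sub continuous_const))

include h0 hη h1 hconv hs0 in
lemma continuous_radial' : Continuous (radial' s p s₀ η) := by
  have hg : Continuous fun x : E => gauge s (x - p) :=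
    (continuous_gauge hconv hs0).comp (continuous_id.sub continuous_const)
  exact continuous_const.add (((continuous_rho' (by linarith : η < 1)).comp hg).smul
    (continuous_id.sub continuous_const))

/-- The radial squeeze as a self-homeomorphism of the ambient space. -/
noncomputable def radialHomeo (hconv : Convex ℝ s) (hs0 : s ∈ 𝓝 0)
    (h0 : 0 < s₀) (hη : 0 < η) (h1 : s₀ < 1 - η) (p : E) : E ≃ₜ E where
  toFun := radial s p s₀ η
  invFun := radial' s p s₀ η
  left_inv := radial'_radial h0 hη h1
  right_inv := radial_radial' h0 hη h1
  continuous_toFun := continuous_radial h0 hη h1 hconv hs0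
  continuous_invFun := continuous_radial' h0 hη h1 hconv hs0

end Radial

section Boxes
variable {d : ℕ}

abbrev Euc (d : ℕ) := EuclideanSpace ℝ (Fin d)

def box (c : Fin d → ℝ) (L : ℝ) : Set (Euc d) := {x | ∀ i, x i ∈ Icc (c i) (c i + L)}

def obox (c : Fin d → ℝ) (L : ℝ) : Set (Euc d) := {x | ∀ i, x i ∈ Ioo (c i) (c i + L)}

lemma obox_subset_box {c : Fin d → ℝ} {L : ℝ} : obox c L ⊆ box c L :=
  fun x hx i => Ioo_subset_Icc_self (hx i)

lemma convex_box (c : Fin d → ℝ) (L : ℝ) : Convex ℝ (box c L) := by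
  intro x hx y hy a b ha hb hab
  intro i
  have : (a • x + b • y) i = a * x i + b * y i := rfl
  rw [this]
  exact convex_Icc (c i) (c i + L) (hx i) (hy i) ha hb hab

lemma isClosed_box (c : Fin d → ℝ) (L : ℝ) : IsClosed (box c L) := by
  have : box c L = ⋂ i, (fun x : Euc d => x i) ⁻¹' Icc (c i) (c i + L) := by
    ext x; simp [box, mem_iInter]
  rw [this]
  exact isClosed_iInter fun i =>
    (isClosed_Icc.preimage (EuclideanSpace.proj (𝕜 := ℝ) i).continuous)

lemma isOpen_obox (c : Fin d → ℝ) (L : ℝ) : IsOpen (obox c L) := by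
  have : obox c L = ⋂ i, (fun x : Euc d => x i) ⁻¹' Ioo (c i) (c i + L) := by
    ext x; simp [obox, mem_iInter]
  rw [this]
  exact isOpen_iInter_of_finite fun i =>
    (isOpen_Ioo.preimage (EuclideanSpace.proj (𝕜 := ℝ) i).continuous)

lemma box_preimage (c : Fin d → ℝ) (L : ℝ) :
    box c L = (MeasurableEquiv.toLp 2 (Fin d → ℝ)).symm ⁻¹'
      (univ.pi fun i => Icc (c i) (c i + L)) := by
  ext x
  simp only [box, mem_setOf_eq, mem_preimage, Set.mem_pi, mem_univ, forall_true_left]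
  rfl

lemma obox_preimage (c : Fin d → ℝ) (L : ℝ) :
    obox c L = (MeasurableEquiv.toLp 2 (Fin d → ℝ)).symm ⁻¹'
      (univ.pi fun i => Ioo (c i) (c i + L)) := by
  ext x
  simp only [obox, mem_setOf_eq, mem_preimage, Set.mem_pi, mem_univ, forall_true_left]
  rfl

lemma volume_box (c : Fin d → ℝ) {L : ℝ} (hL : 0 ≤ L) :
    volume (box c L) = ENNReal.ofReal L ^ d := by
  rw [box_preimage,
    (EuclideanSpace.volume_preserving_symm_measurableEquiv_toLp (Fin d)).measure_preimage_equiv,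
    volume_pi_pi]
  simp [Real.volume_Icc]

lemma volume_obox (c : Fin d → ℝ) {L : ℝ} (hL : 0 ≤ L) :
    volume (obox c L) = ENNReal.ofReal L ^ d := by
  rw [obox_preimage,
    (EuclideanSpace.volume_preserving_symm_measurableEquiv_toLp (Fin d)).measure_preimage_equiv,
    volume_pi_pi]
  simp [Real.volume_Ioo]

lemma isCompact_box (c : Fin d → ℝ) (L : ℝ) : IsCompact (box c L) := by
  have h1 : box c L = (EuclideanSpace.equiv (Fin d) ℝ).symm ''
      (univ.pi fun i => Icc (c i) (c i + L)) := by
    ext x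
    constructor
    · intro hx
      exact ⟨fun i => x i, fun i _ => hx i, rfl⟩
    · rintro ⟨y, hy, rfl⟩ i
      exact hy i (mem_univ i)
  rw [h1]
  exact ((isCompact_univ_pi fun i => isCompact_Icc).image
    (EuclideanSpace.equiv (Fin d) ℝ).symm.continuous)

lemma interior_box_subset (c : Fin d → ℝ) (L : ℝ) :
    interior (box c L) ⊆ obox c L := by
  intro x hx
  obtain ⟨ε, hε, hball⟩ := Metric.isOpen_iff.1 isOpen_interior x hx
  have hxbox := interior_subset hx
  intro i
  constructor
  · by_contra hcon
    push_neg at hcon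
    have hxi : x i = c i := le_antisymm hcon (hxbox i).1
    have hmem : x - (ε/2) • EuclideanSpace.single i (1:ℝ) ∈ box c L := by
      apply interior_subset
      apply hball
      rw [Metric.mem_ball, dist_eq_norm]
      have : x - (ε/2) • EuclideanSpace.single i (1:ℝ) - x
          = -((ε/2) • EuclideanSpace.single i (1:ℝ)) := by abel
      rw [this, norm_neg, norm_smul, EuclideanSpace.norm_single]
      simp only [norm_one, mul_one, Real.norm_eq_abs]
      rw [abs_of_pos (by linarith)]
      linarith
    have := (hmem i).1
    have hval : (x - (ε/2) • EuclideanSpace.single i (1:ℝ)) i = x i - ε/2 := by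
      simp [PiLp.sub_apply, PiLp.smul_apply, EuclideanSpace.single_apply]
    rw [hval, hxi] at this
    linarith
  · by_contra hcon
    push_neg at hcon
    have hxi : x i = c i + L := le_antisymm (hxbox i).2 hcon
    have hmem : x + (ε/2) • EuclideanSpace.single i (1:ℝ) ∈ box c L := by
      apply interior_subset
      apply hball
      rw [Metric.mem_ball, dist_eq_norm]
      have : x + (ε/2) • EuclideanSpace.single i (1:ℝ) - x
          = (ε/2) • EuclideanSpace.single i (1:ℝ) := by abel
      rw [this, norm_smul, EuclideanSpace.norm_single]
      simp only [norm_one, mul_one, Real.norm_eq_abs]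
      rw [abs_of_pos (by linarith)]
      linarith
    have := (hmem i).2
    have hval : (x + (ε/2) • EuclideanSpace.single i (1:ℝ)) i = x i + ε/2 := by
      simp [PiLp.add_apply, PiLp.smul_apply, EuclideanSpace.single_apply]
    rw [hval, hxi] at this
    linarith

/-- The box translated so that `p` goes to `0`. -/
def bodyS (c : Fin d → ℝ) (L : ℝ) (p : Euc d) : Set (Euc d) :=
  (fun v : Euc d => v + p) ⁻¹' box c L

variable {c : Fin d → ℝ} {L : ℝ} {p : Euc d}

lemma mem_bodyS {v : Euc d} : v ∈ bodyS c L p ↔ v + p ∈ box c L := Iff.rfl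

lemma sub_mem_bodyS {x : Euc d} : x - p ∈ bodyS c L p ↔ x ∈ box c L := by
  rw [mem_bodyS, sub_add_cancel]

lemma convex_bodyS : Convex ℝ (bodyS c L p) := by
  intro v hv w hw a b ha hb hab
  rw [mem_bodyS]
  have hp2 : a • p + b • p = p := by rw [← add_smul, hab, one_smul]
  have : a • v + b • w + p = a • (v + p) + b • (w + p) := by
    rw [smul_add, smul_add,
      show a • v + a • p + (b • w + b • p) = a • v + b • w + (a • p + b • p) from by abel, hp2]
  rw [this]
  exact convex_box c L hv hw ha hb hab

lemma isClosed_bodyS : IsClosed (bodyS c L p) :=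
  (isClosed_box c L).preimage (continuous_id.add continuous_const)

lemma isCompact_bodyS : IsCompact (bodyS c L p) := by
  have : bodyS c L p = (fun x : Euc d => x - p) '' box c L := by
    ext v
    constructor
    · intro hv; exact ⟨v + p, hv, add_sub_cancel_right v p⟩
    · rintro ⟨x, hx, rfl⟩
      rw [mem_bodyS, sub_add_cancel]
      exact hx
  rw [this]
  exact (isCompact_box c L).image (continuous_id.sub continuous_const)

lemma oboxPre_subset_interior (hp : p ∈ obox c L) :
    (fun v : Euc d => v + p) ⁻¹' obox c L ⊆ interior (bodyS c L p) :=
  interior_maximal (fun v hv => mem_bodyS.2 (obox_subset_box hv))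
    ((isOpen_obox c L).preimage (continuous_id.add continuous_const))

lemma bodyS_mem_nhds (hp : p ∈ obox c L) : bodyS c L p ∈ 𝓝 0 := by
  refine Filter.mem_of_superset
    (((isOpen_obox c L).preimage (continuous_id.add continuous_const)).mem_nhds ?_)
    (fun v hv => mem_bodyS.2 (obox_subset_box hv))
  show (0 : Euc d) + p ∈ obox c L
  rwa [zero_add]

lemma mem_box_iff_gauge_le_one (hp : p ∈ obox c L) {x : Euc d} :
    x ∈ box c L ↔ gauge (bodyS c L p) (x - p) ≤ 1 := by
  rw [gauge_le_one_iff_mem_closure convex_bodyS (bodyS_mem_nhds hp),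
    isClosed_bodyS.closure_eq, sub_mem_bodyS]

lemma one_le_gauge_of_not_obox (hp : p ∈ obox c L) {x : Euc d} (hx : x ∉ obox c L) :
    1 ≤ gauge (bodyS c L p) (x - p) := by
  by_contra hcon
  push_neg at hcon
  have h2 : x - p ∈ interior (bodyS c L p) :=
    (gauge_lt_one_iff_mem_interior convex_bodyS (bodyS_mem_nhds hp)).1 hcon
  have h3 : interior (bodyS c L p)
      = (fun v : Euc d => v + p) ⁻¹' interior (box c L) := by
    have := (Homeomorph.addRight p).preimage_interior (box c L)
    simpa [bodyS] using this.symm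
  rw [h3] at h2
  have h4 : x ∈ interior (box c L) := by
    have : x - p + p = x := by abel
    rwa [mem_preimage, this] at h2
  exact hx (interior_box_subset c L h4)

lemma norm_le_of_gauge_lt (hp : p ∈ obox c L) {R s₀ : ℝ} (hs₀ : 0 < s₀) (hR : 0 < R)
    (hRb : bodyS c L p ⊆ Metric.closedBall 0 R) {v : Euc d}
    (hv : gauge (bodyS c L p) v < s₀) : ‖v‖ ≤ s₀ * R := by
  have hw : gauge (bodyS c L p) (s₀⁻¹ • v) ≤ 1 := by
    rw [gauge_smul_of_nonneg (inv_nonneg.2 hs₀.le), smul_eq_mul]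
    rw [inv_mul_le_iff₀ hs₀, mul_one]
    exact hv.le
  have hmem : s₀⁻¹ • v ∈ bodyS c L p := by
    have := (gauge_le_one_iff_mem_closure convex_bodyS (bodyS_mem_nhds hp)).1 hw
    rwa [isClosed_bodyS.closure_eq] at this
  have hnorm : ‖s₀⁻¹ • v‖ ≤ R := by
    have := hRb hmem
    rwa [Metric.mem_closedBall, dist_zero_right] at this
  calc ‖v‖ = ‖s₀ • s₀⁻¹ • v‖ := by rw [smul_inv_smul₀ hs₀.ne']
    _ = s₀ * ‖s₀⁻¹ • v‖ := by rw [norm_smul, Real.norm_eq_abs, abs_of_pos hs₀]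
    _ ≤ s₀ * R := by apply mul_le_mul_of_nonneg_left hnorm hs₀.le

lemma gauge_lt_of_mem_scaled (hp : p ∈ obox c L) {η : ℝ} (hη0 : 0 < η) (hη1 : η < 1)
    {x : Euc d} (hx : x ∈ obox (fun i => p i + (1 - η) * (c i - p i)) ((1 - η) * L)) :
    gauge (bodyS c L p) (x - p) < 1 - η := by
  have h1η : (0:ℝ) < 1 - η := by linarith
  set w : Euc d := (1 - η)⁻¹ • (x - p) with hw
  have hwmem : w + p ∈ obox c L := by
    intro i
    have hxi := hx i
    have hwi : (w + p) i = (1 - η)⁻¹ * (x i - p i) + p i := rfl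
    simp only [mem_Ioo] at hxi ⊢
    rw [hwi]
    constructor
    · have : (1 - η) * (c i - p i) < x i - p i := by linarith [hxi.1]
      have h2 := (lt_div_iff₀ h1η).2 (by linarith : (c i - p i) * (1-η) < x i - p i)
      rw [div_eq_inv_mul] at h2
      linarith
    · have : x i - p i < (1 - η) * (c i + L - p i) := by nlinarith [hxi.2]
      have h2 := (div_lt_iff₀ h1η).2 (by linarith : x i - p i < (c i + L - p i) * (1-η))
      rw [div_eq_inv_mul] at h2
      linarith
  have hwint : w ∈ interior (bodyS c L p) :=
    oboxPre_subset_interior hp hwmem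
  have hgw : gauge (bodyS c L p) w < 1 := interior_subset_gauge_lt_one _ hwint
  have hxp : x - p = (1 - η) • w := by rw [hw, smul_inv_smul₀ h1η.ne']
  rw [hxp, gauge_smul_of_nonneg h1η.le, smul_eq_mul]
  nlinarith

lemma volume_annulus (hp : p ∈ obox c L) (hL : 0 < L) {η : ℝ} (hη0 : 0 < η) (hη1 : η < 1) :
    volume {x | x ∈ box c L ∧ 1 - η ≤ gauge (bodyS c L p) (x - p)}
      ≤ ENNReal.ofReal L ^ d - ENNReal.ofReal ((1 - η) * L) ^ d := by
  set A := {x | x ∈ box c L ∧ 1 - η ≤ gauge (bodyS c L p) (x - p)}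
  set O := obox (fun i => p i + (1 - η) * (c i - p i)) ((1 - η) * L)
  have hOg : ∀ x ∈ O, gauge (bodyS c L p) (x - p) < 1 - η :=
    fun x hx => gauge_lt_of_mem_scaled hp hη0 hη1 hx
  have hOb : O ⊆ box c L := fun x hx =>
    (mem_box_iff_gauge_le_one hp).2 (le_trans (hOg x hx).le (by linarith))
  have hdisj : Disjoint A O := by
    rw [Set.disjoint_left]
    rintro x ⟨_, hge⟩ hO
    exact absurd (hOg x hO) (not_lt.2 hge)
  have hunion : A ∪ O ⊆ box c L := union_subset (fun x hx => hx.1) hOb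
  have hOmeas : MeasurableSet O := (isOpen_obox _ _).measurableSet
  have hsum : volume A + volume O ≤ ENNReal.ofReal L ^ d := by
    rw [← measure_union hdisj hOmeas, ← volume_box c hL.le]
    exact measure_mono hunion
  have hOvol : volume O = ENNReal.ofReal ((1 - η) * L) ^ d :=
    volume_obox _ (mul_nonneg (by linarith) hL.le)
  rw [hOvol] at hsum
  exact ENNReal.le_sub_of_add_le_right (by simp [ENNReal.pow_ne_top]) hsum

lemma cube_squeeze {c : Fin d → ℝ} {L : ℝ} (hL : 0 < L) {η : ℝ} (hη0 : 0 < η) (hη1 : η < 1)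
    {K : Set (Euc d)} (hK : IsClosed K) {z : Euc d} (hz : z ∈ obox c L) (hzK : z ∉ K) :
    ∃ H : Euc d ≃ₜ Euc d,
      (∀ x, x ∉ obox c L → H x = x) ∧
      (∀ y, y ∉ obox c L → H.symm y = y) ∧
      MapsTo H (box c L) (box c L) ∧
      MapsTo H.symm (box c L) (box c L) ∧
      volume (H '' (K ∩ box c L))
        ≤ ENNReal.ofReal L ^ d - ENNReal.ofReal ((1 - η) * L) ^ d := by
  obtain ⟨r, hr, hball⟩ := Metric.isOpen_iff.1 hK.isOpen_compl z hzK
  obtain ⟨R, hR, hRb⟩ :=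
    (isCompact_bodyS (c := c) (L := L) (p := z)).isBounded.subset_closedBall_lt 0 0
  set s₀ : ℝ := min (r / (2 * R)) ((1 - η) / 2) with hs₀def
  have h0 : 0 < s₀ := lt_min (by positivity) (by linarith)
  have h1 : s₀ < 1 - η := lt_of_le_of_lt (min_le_right _ _) (by linarith)
  set S := bodyS c L z with hSdef
  have hmaps : MapsTo (radialHomeo (convex_bodyS) (bodyS_mem_nhds hz) h0 hη0 h1 z)
      (box c L) (box c L) := by
    intro x' hx'
    have hg : gauge S (x' - z) ≤ 1 := (mem_box_iff_gauge_le_one hz).1 hx'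
    refine (mem_box_iff_gauge_le_one hz).2 ?_
    show gauge S (radial S z s₀ η x' - z) ≤ 1
    rw [gauge_radial h0 hη0 h1 x']
    exact psi_le_one h0 hη0 h1 (gauge_nonneg _) hg
  refine ⟨radialHomeo (convex_bodyS) (bodyS_mem_nhds hz) h0 hη0 h1 z, ?_, ?_, hmaps, ?_, ?_⟩
  · intro x hx
    exact radial_of_one_le h0 hη0 h1 x (one_le_gauge_of_not_obox hz hx)
  · intro y hy
    exact radial'_of_one_le h0 hη0 h1 y (one_le_gauge_of_not_obox hz hy)
  · intro y hy
    have hg : gauge S (y - z) ≤ 1 := (mem_box_iff_gauge_le_one hz).1 hy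
    refine (mem_box_iff_gauge_le_one hz).2 ?_
    show gauge S (radial' S z s₀ η y - z) ≤ 1
    rw [gauge_radial' h0 hη0 h1 y]
    exact le_trans phi_le_self hg
  · refine le_trans (measure_mono ?_) (volume_annulus hz hL hη0 hη1)
    rintro y ⟨x, ⟨hxK, hxbox⟩, rfl⟩
    have hgs : s₀ ≤ gauge S (x - z) := by
      by_contra hcon
      push_neg at hcon
      have hnorm : ‖x - z‖ ≤ s₀ * R := norm_le_of_gauge_lt hz h0 hR hRb hcon
      have hs₀R : s₀ * R ≤ r / 2 := by
        have : s₀ ≤ r / (2 * R) := min_le_left _ _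
        calc s₀ * R ≤ r / (2 * R) * R := mul_le_mul_of_nonneg_right this hR.le
          _ = r / 2 := by field_simp
      have : x ∈ Metric.ball z r := by
        rw [Metric.mem_ball, dist_eq_norm]
        linarith
      exact hball this hxK
    constructor
    · exact hmaps hxbox
    · show 1 - η ≤ gauge S (radialHomeo (convex_bodyS) (bodyS_mem_nhds hz) h0 hη0 h1 z x - z)
      show 1 - η ≤ gauge S (radial S z s₀ η x - z)
      rw [gauge_radial h0 hη0 h1 x]
      exact psi_ge h0 hη0 h1 hgs

/-- Corner of a grid box. -/
noncomputable def gridc (n : ℕ) (j : Fin d → Fin n) : Fin d → ℝ := fun i => (j i : ℝ) / n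

lemma box_subset_cube {n : ℕ} (hn : 0 < n) (j : Fin d → Fin n) :
    box (gridc n j) (1 / n) ⊆ cube d := by
  intro x hx i
  have h1 := hx i
  have hn' : (0:ℝ) < n := by exact_mod_cast hn
  have hji : (j i : ℝ) ≤ n - 1 := by
    have : (j i : ℕ) ≤ n - 1 := Nat.le_sub_one_of_lt (j i).isLt
    have h2 : ((j i : ℕ) : ℝ) ≤ ((n - 1 : ℕ) : ℝ) := by exact_mod_cast this
    rwa [Nat.cast_sub hn, Nat.cast_one] at h2
  simp only [gridc, mem_Icc] at h1 ⊢
  constructor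
  · have : (0:ℝ) ≤ (j i : ℝ) / n := by positivity
    linarith [h1.1]
  · have h2 : (j i : ℝ) / n + 1 / n ≤ 1 := by
      rw [← add_div, div_le_one hn']
      linarith
    linarith [h1.2]

lemma exists_grid_box {n : ℕ} (hn : 0 < n) {x : Euc d} (hx : x ∈ cube d) :
    ∃ j : Fin d → Fin n, x ∈ box (gridc n j) (1 / n) := by
  have hn' : (0:ℝ) < n := by exact_mod_cast hn
  refine ⟨fun i => ⟨min (n - 1) ⌊x i * n⌋₊, lt_of_le_of_lt (min_le_left _ _)
    (Nat.sub_lt hn one_pos)⟩, fun i => ?_⟩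
  have hxi := hx i
  simp only [mem_Icc] at hxi
  have hx0 : 0 ≤ x i * n := mul_nonneg hxi.1 hn'.le
  simp only [gridc, mem_Icc]
  rcases le_or_gt n ⌊x i * n⌋₊ with hcase | hcase
  · -- x i = 1
    have h1 : (n:ℝ) ≤ x i * n := by
      have := (Nat.le_floor_iff hx0).1 hcase
      simpa using this
    have hx1 : x i = 1 := le_antisymm hxi.2 (by nlinarith)
    have hmin : min (n - 1) ⌊x i * n⌋₊ = n - 1 :=
      min_eq_left (le_trans (Nat.sub_le n 1) hcase)
    have hcast : ((⟨min (n - 1) ⌊x i * n⌋₊, lt_of_le_of_lt (min_le_left _ _)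
        (Nat.sub_lt hn one_pos)⟩ : Fin n) : ℝ) = (n:ℝ) - 1 := by
      show ((min (n - 1) ⌊x i * n⌋₊ : ℕ) : ℝ) = (n:ℝ) - 1
      rw [hmin, Nat.cast_sub hn, Nat.cast_one]
    rw [hcast, hx1]
    constructor
    · rw [div_le_one hn']; linarith
    · rw [← add_div, le_div_iff₀ hn']; linarith
  · have hmin : min (n - 1) ⌊x i * n⌋₊ = ⌊x i * n⌋₊ :=
      min_eq_right (Nat.le_sub_one_of_lt hcase)
    have hcast : ((⟨min (n - 1) ⌊x i * n⌋₊, lt_of_le_of_lt (min_le_left _ _)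
        (Nat.sub_lt hn one_pos)⟩ : Fin n) : ℝ) = (⌊x i * n⌋₊ : ℝ) := by
      show ((min (n - 1) ⌊x i * n⌋₊ : ℕ) : ℝ) = _
      rw [hmin]
    rw [hcast]
    constructor
    · rw [div_le_iff₀ hn']
      calc (⌊x i * n⌋₊ : ℝ) ≤ x i * n := Nat.floor_le hx0
        _ = x i * n := rfl
    · rw [← add_div, le_div_iff₀ hn']
      have := Nat.lt_floor_add_one (x i * n)
      linarith

lemma not_obox_of_mem_other {n : ℕ} {i j : Fin d → Fin n} (hij : i ≠ j) {x : Euc d}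
    (hx : x ∈ box (gridc n j) (1 / n)) : x ∉ obox (gridc n i) (1 / n) := by
  intro hxo
  obtain ⟨k, hk⟩ := Function.ne_iff.1 hij
  have hn' : (0:ℝ) < n := by exact_mod_cast (i k).pos
  have hxk := hx k
  have hxok := hxo k
  simp only [gridc, mem_Icc, mem_Ioo] at hxk hxok
  rcases lt_or_gt_of_ne hk with hlt | hgt
  · have h1 : ((i k : ℕ) : ℝ) + 1 ≤ ((j k : ℕ) : ℝ) := by
      have : (i k : ℕ) + 1 ≤ (j k : ℕ) := Nat.succ_le_of_lt hlt
      exact_mod_cast this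
    have h2 : x k < ((i k : ℕ) : ℝ) / n + 1 / n := hxok.2
    have h3 : ((j k : ℕ) : ℝ) / n ≤ x k := hxk.1
    rw [← add_div] at h2
    have : ((i k : ℕ) : ℝ) + 1 ≤ ((j k : ℕ) : ℝ) := h1
    have h4 : (((i k : ℕ) : ℝ) + 1) / n ≤ ((j k : ℕ) : ℝ) / n := by
      exact div_le_div_of_nonneg_right this hn'.le
    linarith
  · have h1 : ((j k : ℕ) : ℝ) + 1 ≤ ((i k : ℕ) : ℝ) := by
      have : (j k : ℕ) + 1 ≤ (i k : ℕ) := Nat.succ_le_of_lt hgt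
      exact_mod_cast this
    have h2 : ((i k : ℕ) : ℝ) / n < x k := hxok.1
    have h3 : x k ≤ ((j k : ℕ) : ℝ) / n + 1 / n := hxk.2
    rw [← add_div] at h3
    have h4 : (((j k : ℕ) : ℝ) + 1) / n ≤ ((i k : ℕ) : ℝ) / n := by
      exact div_le_div_of_nonneg_right h1 hn'.le
    linarith

lemma dist_le_of_mem_box {c : Fin d → ℝ} {L : ℝ} (hL : 0 ≤ L) {x y : Euc d}
    (hx : x ∈ box c L) (hy : y ∈ box c L) : dist x y ≤ Real.sqrt d * L := by
  rw [EuclideanSpace.dist_eq]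
  have hb : ∀ i, dist (x i) (y i) ^ 2 ≤ L ^ 2 := by
    intro i
    have h1 := hx i
    have h2 := hy i
    simp only [mem_Icc] at h1 h2
    rw [Real.dist_eq]
    have habs : |x i - y i| ≤ L := abs_le.2 ⟨by linarith, by linarith⟩
    exact pow_le_pow_left₀ (abs_nonneg _) habs 2
  calc Real.sqrt (∑ i, dist (x i) (y i) ^ 2)
      ≤ Real.sqrt (∑ _i : Fin d, L ^ 2) :=
        Real.sqrt_le_sqrt (Finset.sum_le_sum fun i _ => hb i)
    _ = Real.sqrt ((d : ℝ) * L ^ 2) := by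
        rw [Finset.sum_const, Finset.card_univ, Fintype.card_fin, nsmul_eq_mul]
    _ = Real.sqrt d * L := by
        rw [Real.sqrt_mul (Nat.cast_nonneg d), Real.sqrt_sq hL]

end Boxes

section Comps
variable {ι : Type*} {X : Type*} [TopologicalSpace X]

noncomputable def comps (f : ι → (X ≃ₜ X)) : List ι → (X ≃ₜ X)
  | [] => Homeomorph.refl X
  | a :: t => (f a).trans (comps f t)

lemma comps_cons (f : ι → (X ≃ₜ X)) (a : ι) (t : List ι) (x : X) :
    comps f (a :: t) x = comps f t (f a x) := rfl

lemma comps_symm_cons (f : ι → (X ≃ₜ X)) (a : ι) (t : List ι) (y : X) :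
    (comps f (a :: t)).symm y = (f a).symm ((comps f t).symm y) := rfl

lemma comps_fix (f : ι → (X ≃ₜ X)) (B : ι → Set X)
    (hfix : ∀ i j, i ≠ j → ∀ x ∈ B j, f i x = x) :
    ∀ (l : List ι) (j : ι), j ∉ l → ∀ x ∈ B j, comps f l x = x := by
  intro l
  induction l with
  | nil => intro j _ x _; rfl
  | cons a t ih =>
      intro j hj x hx
      have ha : a ≠ j := fun h => hj (h ▸ List.mem_cons_self)
      rw [comps_cons, hfix a j ha x hx]
      exact ih j (fun h => hj (List.mem_cons_of_mem a h)) x hx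

lemma comps_eq_of_mem (f : ι → (X ≃ₜ X)) (B : ι → Set X)
    (hfix : ∀ i j, i ≠ j → ∀ x ∈ B j, f i x = x)
    (hmap : ∀ j, MapsTo (f j) (B j) (B j)) :
    ∀ (l : List ι), l.Nodup → ∀ j ∈ l, ∀ x ∈ B j, comps f l x = f j x := by
  intro l
  induction l with
  | nil => intro _ j hj; exact absurd hj List.not_mem_nil
  | cons a t ih =>
      intro hnd j hj x hx
      rcases List.mem_cons.1 hj with rfl | hjt
      · rw [comps_cons]
        exact comps_fix f B hfix t j (List.nodup_cons.1 hnd).1 (f j x) (hmap j hx)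
      · have ha : a ≠ j := by
          rintro rfl
          exact (List.nodup_cons.1 hnd).1 hjt
        rw [comps_cons, hfix a j ha x hx]
        exact ih (List.nodup_cons.1 hnd).2 j hjt x hx

lemma comps_maps (f : ι → (X ≃ₜ X)) (C : Set X) (hmap : ∀ i, MapsTo (f i) C C) :
    ∀ l : List ι, MapsTo (comps f l) C C := by
  intro l
  induction l with
  | nil => intro x hx; exact hx
  | cons a t ih =>
      intro x hx
      rw [comps_cons]
      exact ih (hmap a hx)

lemma comps_symm_maps (f : ι → (X ≃ₜ X)) (C : Set X)
    (hmap : ∀ i, MapsTo (f i).symm C C) :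
    ∀ l : List ι, MapsTo (comps f l).symm C C := by
  intro l
  induction l with
  | nil => intro x hx; exact hx
  | cons a t ih =>
      intro y hy
      rw [comps_symm_cons]
      exact hmap a (ih hy)

end Comps

section Global
variable {d : ℕ}

lemma global_squeeze (hd : 1 ≤ d) {K : Set (Euc d)} (hKc : IsClosed K)
    (hKi : interior K = ∅) {ε δ : ℝ} (hε : 0 < ε) (hδ : 0 < δ) :
    ∃ H : Euc d ≃ₜ Euc d, MapsTo H (cube d) (cube d) ∧ MapsTo H.symm (cube d) (cube d) ∧
      (∀ x ∈ cube d, dist (H x) x < δ) ∧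
      volume (H '' (K ∩ cube d)) < ENNReal.ofReal ε := by
  obtain ⟨n, hn⟩ := exists_nat_gt (Real.sqrt d / δ)
  have hn0 : 0 < n := by
    have h1 : (0:ℝ) ≤ Real.sqrt d / δ := div_nonneg (Real.sqrt_nonneg d) hδ.le
    exact_mod_cast lt_of_le_of_lt h1 hn
  have hn' : (0:ℝ) < n := by exact_mod_cast hn0
  have hsq : Real.sqrt d * (1 / n) < δ := by
    rw [mul_one_div, div_lt_iff₀ hn']
    rw [div_lt_iff₀ hδ] at hn
    linarith
  have hd' : (0:ℝ) < d := by exact_mod_cast hd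
  set η : ℝ := min (1/2) (ε / (2 * d)) with hηdef
  have hη0 : 0 < η := lt_min (by norm_num) (by positivity)
  have hη1 : η < 1 := lt_of_le_of_lt (min_le_left _ _) (by norm_num)
  have hηd : (d:ℝ) * η ≤ ε / 2 := by
    have h1 : η ≤ ε / (2 * d) := min_le_right _ _
    calc (d:ℝ) * η ≤ (d:ℝ) * (ε / (2 * d)) := mul_le_mul_of_nonneg_left h1 hd'.le
      _ = ε / 2 := by field_simp
  -- choose a point of each open grid box avoiding K
  have hzex : ∀ j : Fin d → Fin n, ∃ z, z ∈ obox (gridc n j) (1/n) ∧ z ∉ K := by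
    intro j
    by_contra hcon
    push_neg at hcon
    have hsub : obox (gridc n j) (1/n) ⊆ interior K :=
      interior_maximal hcon (isOpen_obox _ _)
    have hmem : (WithLp.toLp 2 (fun i => gridc n j i + 1/(2*n)) : Euc d) ∈ obox (gridc n j) (1/n) := by
      intro i
      constructor
      · have : (0:ℝ) < 1/(2*n) := by positivity
        show gridc n j i < gridc n j i + 1/(2*n)
        linarith
      · show gridc n j i + 1/(2*n) < gridc n j i + 1/n
        have : (1:ℝ)/(2*n) < 1/n := by
          rw [div_lt_div_iff₀ (by positivity) hn']
          linarith
        linarith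
    rw [hKi] at hsub
    exact hsub hmem
  choose z hz1 hz2 using hzex
  have hL : (0:ℝ) < 1/n := by positivity
  choose Hf hfix1 hfix2 hmap1 hmap2 hvol using
    fun j : Fin d → Fin n => cube_squeeze hL hη0 hη1 hKc (hz1 j) (hz2 j)
  set B : (Fin d → Fin n) → Set (Euc d) := fun j => box (gridc n j) (1/n) with hBdef
  have hfix : ∀ i j, i ≠ j → ∀ x ∈ B j, Hf i x = x := fun i j hij x hx =>
    hfix1 i x (not_obox_of_mem_other hij hx)
  set l := (Finset.univ : Finset (Fin d → Fin n)).toList with hldef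
  set H := comps Hf l with hHdef
  have hcubemap : ∀ i, MapsTo (Hf i) (cube d) (cube d) := by
    intro i x hx
    by_cases hb : x ∈ B i
    · exact box_subset_cube hn0 i (hmap1 i hb)
    · rw [hfix1 i x (fun ho => hb (obox_subset_box ho))]
      exact hx
  have hcubemap' : ∀ i, MapsTo (Hf i).symm (cube d) (cube d) := by
    intro i y hy
    by_cases hb : y ∈ B i
    · exact box_subset_cube hn0 i (hmap2 i hb)
    · rw [hfix2 i y (fun ho => hb (obox_subset_box ho))]
      exact hy
  have hkey : ∀ (j : Fin d → Fin n), ∀ x ∈ B j, H x = Hf j x := by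
    intro j x hx
    exact comps_eq_of_mem Hf B hfix hmap1 l (Finset.nodup_toList _)
      j (Finset.mem_toList.2 (Finset.mem_univ j)) x hx
  refine ⟨H, comps_maps Hf (cube d) hcubemap l, comps_symm_maps Hf (cube d) hcubemap' l,
    ?_, ?_⟩
  · intro x hx
    obtain ⟨j, hj⟩ := exists_grid_box hn0 hx
    rw [hkey j x hj]
    exact lt_of_le_of_lt (dist_le_of_mem_box hL.le (hmap1 j hj) hj) hsq
  · have hsub : H '' (K ∩ cube d) ⊆ ⋃ j, Hf j '' (K ∩ B j) := by
      rintro y ⟨x, ⟨hxK, hxc⟩, rfl⟩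
      obtain ⟨j, hj⟩ := exists_grid_box hn0 hxc
      exact mem_iUnion.2 ⟨j, ⟨x, ⟨hxK, hj⟩, (hkey j x hj).symm⟩⟩
    have hbound : volume (H '' (K ∩ cube d))
        ≤ (n ^ d : ℕ) • (ENNReal.ofReal (1/n) ^ d
            - ENNReal.ofReal ((1 - η) * (1/n)) ^ d) := by
      refine le_trans (measure_mono hsub) (le_trans (measure_iUnion_le _) ?_)
      rw [tsum_fintype]
      refine le_trans (Finset.sum_le_sum fun j _ => hvol j) ?_
      rw [Finset.sum_const, Finset.card_univ]
      have hcard : Fintype.card (Fin d → Fin n) = n ^ d := by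
        rw [Fintype.card_fun, Fintype.card_fin, Fintype.card_fin]
      rw [hcard]
    refine lt_of_le_of_lt hbound ?_
    have ha : (0:ℝ) ≤ 1/n := hL.le
    have hb : (0:ℝ) ≤ (1 - η) * (1/n) := mul_nonneg (by linarith) hL.le
    rw [← ENNReal.ofReal_pow ha, ← ENNReal.ofReal_pow hb,
      ← ENNReal.ofReal_sub _ (by positivity), nsmul_eq_mul]
    have hcast : ((n ^ d : ℕ) : ENNReal) = ENNReal.ofReal ((n:ℝ) ^ d) := by
      rw [← ENNReal.ofReal_natCast]
      norm_num
    rw [hcast, ← ENNReal.ofReal_mul (by positivity)]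
    have heq : (n:ℝ) ^ d * ((1/n) ^ d - ((1 - η) * (1/n)) ^ d) = 1 - (1 - η) ^ d := by
      have hne : (n:ℝ) ≠ 0 := hn'.ne'
      field_simp
      rw [div_pow, div_pow, one_pow, ← sub_div, mul_div_assoc', mul_comm, mul_div_assoc,
        div_self (pow_ne_zero d hne), mul_one]
    rw [heq]
    refine (ENNReal.ofReal_lt_ofReal_iff hε).2 ?_
    have hbern : 1 + (d:ℝ) * (-η) ≤ (1 + (-η)) ^ d :=
      one_add_mul_le_pow (by linarith) d
    have : 1 - (1 - η) ^ d ≤ (d:ℝ) * η := by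
      have h2 : (1:ℝ) + -η = 1 - η := by ring
      rw [h2] at hbern
      linarith
    linarith

end Global

section HomeoCubeStuff
variable {d : ℕ}

lemma cube_eq_box : cube d = box (fun _ => (0:ℝ)) 1 := by
  ext x
  constructor <;> intro h i <;> simpa using h i

instance cubeCompactSpace (d : ℕ) : CompactSpace ↥(cube d) :=
  isCompact_iff_compactSpace.1 (by rw [cube_eq_box]; exact isCompact_box _ _)

lemma volume_cube : volume (cube d) = 1 := by
  rw [cube_eq_box, volume_box (fun _ => (0:ℝ)) one_pos.le]
  simp

/-- Restriction of an ambient homeomorphism preserving the cube to the cube. -/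
noncomputable def restrictHomeo (H : Euc d ≃ₜ Euc d)
    (h1 : MapsTo H (cube d) (cube d)) (h2 : MapsTo H.symm (cube d) (cube d)) :
    C(↥(cube d), ↥(cube d)) :=
  ⟨fun x => ⟨H x, h1 x.2⟩, Continuous.subtype_mk (H.continuous.comp continuous_subtype_val) _⟩

lemma isHomeomorph_restrictHomeo (H : Euc d ≃ₜ Euc d)
    (h1 : MapsTo H (cube d) (cube d)) (h2 : MapsTo H.symm (cube d) (cube d)) :
    IsHomeomorph (restrictHomeo H h1 h2) := by
  rw [isHomeomorph_iff_continuous_bijective]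
  refine ⟨(restrictHomeo H h1 h2).continuous, ?_, ?_⟩
  · intro x y hxy
    apply Subtype.ext
    exact H.injective (congrArg Subtype.val hxy)
  · intro y
    refine ⟨⟨H.symm y.1, h2 y.2⟩, ?_⟩
    apply Subtype.ext
    show H (H.symm y.1) = y.1
    exact H.apply_symm_apply _

lemma isOpen_vol_lt (C : Set ↥(cube d)) (hC : IsCompact C) (ε : ENNReal) :
    IsOpen {f : HomeoCube d |
      volume (Subtype.val '' (f.1 '' C) : Set (Euc d)) < ε} := by
  rw [isOpen_iff_forall_mem_open]
  intro f hf
  simp only [mem_setOf_eq] at hf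
  obtain ⟨V, hAV, hVopen, hVvol⟩ :=
    Set.exists_isOpen_lt_of_lt (Subtype.val '' (f.1 '' C) : Set (Euc d)) ε hf
  refine ⟨Subtype.val ⁻¹'
      {g : C(↥(cube d), ↥(cube d)) | MapsTo g C (Subtype.val ⁻¹' V)}, ?_, ?_, ?_⟩
  · intro g hg
    simp only [mem_preimage, mem_setOf_eq] at hg ⊢
    calc volume (Subtype.val '' (g.1 '' C) : Set (Euc d)) ≤ volume V := by
          apply measure_mono
          rintro y ⟨w, ⟨x, hxC, rfl⟩, rfl⟩
          exact hg hxC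
      _ < ε := hVvol
  · exact (ContinuousMap.isOpen_setOf_mapsTo hC
      (hVopen.preimage continuous_subtype_val)).preimage continuous_subtype_val
  · intro x hx
    exact hAV ⟨f.1 x, ⟨x, hx, rfl⟩, rfl⟩

lemma dense_vol_lt (hd : 1 ≤ d) (C : Set ↥(cube d)) (hCc : IsClosed C)
    (hCi : interior C = ∅) {ε : ℝ} (hε : 0 < ε) :
    Dense {f : HomeoCube d |
      volume (Subtype.val '' (f.1 '' C) : Set (Euc d)) < ENNReal.ofReal ε} := by
  rw [dense_iff_inter_open]
  rintro O hO ⟨f, hfO⟩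
  obtain ⟨O', hO'open, rfl⟩ := isOpen_induced_iff.1 hO
  obtain ⟨δ, hδ, hball⟩ := Metric.isOpen_iff.1 hO'open f.1 hfO
  have hKcomp : IsCompact (Subtype.val '' (f.1 '' C) : Set (Euc d)) :=
    ((hCc.isCompact).image f.1.continuous).image continuous_subtype_val
  have hKcl : IsClosed (Subtype.val '' (f.1 '' C) : Set (Euc d)) := hKcomp.isClosed
  have hKsub : (Subtype.val '' (f.1 '' C) : Set (Euc d)) ⊆ cube d := by
    rintro z ⟨y, hy, rfl⟩; exact y.2
  have hKint : interior (Subtype.val '' (f.1 '' C) : Set (Euc d)) = ∅ := by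
    by_contra hne
    rw [← Ne, ← nonempty_iff_ne_empty] at hne
    obtain ⟨x, hx⟩ := hne
    obtain ⟨y, hyC, hyx⟩ := interior_subset hx
    have hopen : IsOpen (Subtype.val ⁻¹'
        interior (Subtype.val '' (f.1 '' C) : Set (Euc d)) : Set ↥(cube d)) :=
      isOpen_interior.preimage continuous_subtype_val
    have hsub : (Subtype.val ⁻¹'
        interior (Subtype.val '' (f.1 '' C) : Set (Euc d)) : Set ↥(cube d)) ⊆ f.1 '' C := by
      intro v hv
      obtain ⟨w, hwC, hwv⟩ := interior_subset hv
      rwa [show w = v from Subtype.ext hwv] at hwC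
    have hmem : y ∈ (Subtype.val ⁻¹'
        interior (Subtype.val '' (f.1 '' C) : Set (Euc d)) : Set ↥(cube d)) := by
      rwa [mem_preimage, hyx]
    have hintne : (interior (f.1 '' C)).Nonempty := ⟨y, interior_maximal hsub hopen hmem⟩
    have he : f.1 '' C = (f.2.homeomorph f.1) '' C := rfl
    rw [he, ← Homeomorph.image_interior, hCi, image_empty] at hintne
    exact (not_nonempty_empty hintne)
  obtain ⟨H, hmap1, hmap2, hdist, hvol⟩ := global_squeeze hd hKcl hKint hε (half_pos hδ)
  set gmap := restrictHomeo H hmap1 hmap2 with hgmapdef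
  refine ⟨⟨gmap.comp f.1, (isHomeomorph_restrictHomeo H hmap1 hmap2).comp f.2⟩, ?_, ?_⟩
  · apply hball
    rw [Metric.mem_ball]
    have hle : dist (gmap.comp f.1) (f.1) ≤ δ/2 := by
      rw [ContinuousMap.dist_le (by linarith)]
      intro x
      have h2 : dist (H ((f.1 x : Euc d))) ((f.1 x : Euc d)) < δ/2 := hdist _ (f.1 x).2
      exact le_of_lt h2
    calc dist (gmap.comp f.1) (f.1) ≤ δ/2 := hle
      _ < δ := by linarith
  · show volume (Subtype.val '' ((gmap.comp f.1 : C(↥(cube d), ↥(cube d))) '' C)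
        : Set (Euc d)) < ENNReal.ofReal ε
    have himg : (Subtype.val '' ((gmap.comp f.1 : C(↥(cube d), ↥(cube d))) '' C)
        : Set (Euc d)) = H '' (Subtype.val '' (f.1 '' C)) := by
      ext z
      constructor
      · rintro ⟨y, ⟨x, hx, rfl⟩, rfl⟩
        exact ⟨(f.1 x : Euc d), ⟨f.1 x, ⟨x, hx, rfl⟩, rfl⟩, rfl⟩
      · rintro ⟨w, ⟨y, ⟨x, hx, rfl⟩, rfl⟩, rfl⟩
        exact ⟨gmap (f.1 x), ⟨x, hx, rfl⟩, rfl⟩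
    rw [himg, ← inter_eq_left.2 hKsub]
    exact hvol

end HomeoCubeStuff

section Final
variable {d : ℕ}

lemma part1 (hd : 1 ≤ d) (M : Set ↥(cube d)) (hM : IsMeagre M) :
    {f : HomeoCube d |
      volume (Subtype.val '' (f.1 '' M) : Set (Euc d)) = 0} ∈ residual (HomeoCube d) := by
  obtain ⟨S, hS1, hS2, hS3⟩ := isMeagre_iff_countable_union_isNowhereDense.1 hM
  rcases S.eq_empty_or_nonempty with rfl | hSne
  · have hM0 : M = ∅ := by simpa using hS3
    apply Filter.mem_of_superset Filter.univ_mem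
    intro f _
    simp [hM0]
  obtain ⟨F, rfl⟩ := hS2.exists_eq_range hSne
  set G : ℕ → Set ↥(cube d) := fun n => closure (F n) with hGdef
  have hGcl : ∀ n, IsClosed (G n) := fun n => isClosed_closure
  have hGint : ∀ n, interior (G n) = ∅ := fun n => hS1 (F n) ⟨n, rfl⟩
  set U : ℕ × ℕ → Set (HomeoCube d) := fun p =>
    {f : HomeoCube d | volume (Subtype.val '' (f.1 '' (G p.1)) : Set (Euc d))
      < ENNReal.ofReal (((p.2 : ℝ) + 1)⁻¹)} with hUdef
  have hUres : ∀ p, U p ∈ residual (HomeoCube d) := fun p =>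
    residual_of_dense_open
      (isOpen_vol_lt _ (hGcl p.1).isCompact _)
      (dense_vol_lt hd _ (hGcl p.1) (hGint p.1) (by positivity))
  refine Filter.mem_of_superset ((countable_iInter_mem).2 hUres) ?_
  intro f hf
  have hz : ∀ n, volume (Subtype.val '' (f.1 '' (G n)) : Set (Euc d)) = 0 := by
    intro n
    by_contra hne
    obtain ⟨k, hk⟩ := ENNReal.exists_inv_nat_lt hne
    have hfk : volume (Subtype.val '' (f.1 '' (G n)) : Set (Euc d))
        < ENNReal.ofReal (((k : ℝ) + 1)⁻¹) := mem_iInter.1 hf (n, k)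
    have hle : ENNReal.ofReal (((k : ℝ) + 1)⁻¹) ≤ ((k : ℕ) : ENNReal)⁻¹ := by
      rw [ENNReal.ofReal_inv_of_pos (by positivity)]
      rw [show ENNReal.ofReal ((k:ℝ) + 1) = ((k:ENNReal) + 1) by
        rw [ENNReal.ofReal_add (by positivity) one_pos.le]
        simp]
      exact ENNReal.inv_le_inv.2 (le_add_of_nonneg_right zero_le_one)
    exact absurd (lt_trans hk (lt_of_lt_of_le hfk hle)) (lt_irrefl _)
  refine measure_mono_null ?_ (measure_iUnion_null hz)
  rintro z ⟨y, ⟨x, hxM, rfl⟩, rfl⟩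
  obtain ⟨t, ⟨n, rfl⟩, hxt⟩ := hS3 hxM
  exact mem_iUnion.2 ⟨n, ⟨f.1 x, ⟨x, subset_closure hxt, rfl⟩, rfl⟩⟩

lemma abs_coord_le_dist (x y : Euc d) (i : Fin d) : |x i - y i| ≤ dist x y := by
  rw [EuclideanSpace.dist_eq]
  have h1 : |x i - y i| = Real.sqrt (dist (x i) (y i) ^ 2) := by
    rw [Real.sqrt_sq dist_nonneg, Real.dist_eq]
  rw [h1]
  exact Real.sqrt_le_sqrt (Finset.single_le_sum (f := fun j => dist (x j) (y j) ^ 2)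
    (fun j _ => sq_nonneg _) (Finset.mem_univ i))

lemma ball_subset_box (z : Euc d) {r : ℝ} (hr : 0 < r) :
    Metric.ball z r ⊆ box (fun i => z i - r) (2 * r) := by
  intro y hy
  rw [Metric.mem_ball] at hy
  intro i
  have := abs_coord_le_dist y z i
  have habs : |y i - z i| < r := lt_of_le_of_lt this hy
  rw [abs_lt] at habs
  constructor <;> [skip; skip] <;> · simp only []; linarith [habs.1, habs.2]

lemma exists_full_meagre (hd : 1 ≤ d) : ∃ M₀ : Set ↥(cube d), IsMeagre M₀ ∧
    MeasurableSet M₀ ∧ volume (Subtype.val '' M₀ : Set (Euc d)) = 1 := by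
  have hne : Nonempty ↥(cube d) := ⟨⟨0, fun i => by norm_num⟩⟩
  obtain ⟨s, hsc, hsd⟩ := TopologicalSpace.exists_countable_dense ↥(cube d)
  obtain ⟨u, rfl⟩ := hsc.exists_eq_range hsd.nonempty
  set Gk : ℕ → Set (Euc d) := fun k => ⋃ i, Metric.ball (↑(u i)) ((1/2)^(i+k+2)) with hGkdef
  have hGkopen : ∀ k, IsOpen (Gk k) := fun k => isOpen_iUnion fun i => Metric.isOpen_ball
  have hhalf : ∀ m : ℕ, ENNReal.ofReal ((1/2 : ℝ)^m) = (2⁻¹ : ENNReal)^m := by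
    intro m
    rw [ENNReal.ofReal_pow (by norm_num)]
    congr 1
    rw [show (1/2:ℝ) = (2:ℝ)⁻¹ by norm_num, ENNReal.ofReal_inv_of_pos two_pos]
    norm_num
  have hballvol : ∀ (i k : ℕ),
      volume (Metric.ball ((u i : Euc d)) ((1/2)^(i+k+2)))
        ≤ (2⁻¹ : ENNReal)^(i+k+1) := by
    intro i k
    have hr : (0:ℝ) < (1/2)^(i+k+2) := by positivity
    refine le_trans (measure_mono (ball_subset_box _ hr)) ?_
    rw [volume_box _ (by positivity)]
    have h2r : (2 : ℝ) * (1/2)^(i+k+2) = (1/2)^(i+k+1) := by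
      rw [pow_succ]
      ring
    rw [h2r, ← ENNReal.ofReal_pow (by positivity)]
    have hle1 : ((1/2:ℝ)^(i+k+1))^d ≤ (1/2:ℝ)^(i+k+1) := by
      apply pow_le_of_le_one (by positivity) (pow_le_one₀ (by norm_num) (by norm_num)) (by omega)
    calc ENNReal.ofReal (((1/2:ℝ)^(i+k+1))^d) ≤ ENNReal.ofReal ((1/2:ℝ)^(i+k+1)) :=
          ENNReal.ofReal_le_ofReal hle1
      _ = (2⁻¹ : ENNReal)^(i+k+1) := hhalf _
  have hGkvol : ∀ k, volume (Gk k) ≤ (2⁻¹ : ENNReal)^k := by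
    intro k
    refine le_trans (measure_iUnion_le _) ?_
    have hsum : ∑' i : ℕ, (2⁻¹ : ENNReal)^(i+k+1) = (2⁻¹ : ENNReal)^(k+1) * 2 := by
      have : ∀ i : ℕ, (2⁻¹ : ENNReal)^(i+k+1) = (2⁻¹ : ENNReal)^(k+1) * (2⁻¹)^i := by
        intro i
        rw [← pow_add]
        congr 1
        omega
      rw [tsum_congr this, ENNReal.tsum_mul_left, ENNReal.tsum_geometric]
      congr 1
      rw [ENNReal.one_sub_inv_two, inv_inv]
    refine le_trans (ENNReal.tsum_le_tsum fun i => hballvol i k) ?_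
    rw [hsum, pow_succ, mul_assoc, ENNReal.inv_mul_cancel (by norm_num) (by norm_num), mul_one]
  set G := ⋂ k, Gk k with hGdef
  have hGvol : volume G = 0 := by
    have hle : ∀ k, volume G ≤ (2⁻¹ : ENNReal)^k := fun k =>
      measure_mono (iInter_subset _ k) |>.trans (hGkvol k)
    have htend : Tendsto (fun k : ℕ => (2⁻¹ : ENNReal)^k) atTop (𝓝 0) :=
      ENNReal.tendsto_pow_atTop_nhds_zero_of_lt_one (by norm_num)
    exact le_antisymm (ge_of_tendsto' htend hle) zero_le
  have hudense : Dense (Set.range u) := hsd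
  refine ⟨Subtype.val ⁻¹' Gᶜ, ?_, ?_, ?_⟩
  · have heq : (Subtype.val ⁻¹' Gᶜ : Set ↥(cube d)) = ⋃ k, Subtype.val ⁻¹' (Gk k)ᶜ := by
      rw [hGdef, compl_iInter, preimage_iUnion]
    rw [heq]
    refine isMeagre_iUnion fun k => ?_
    show (Subtype.val ⁻¹' (Gk k)ᶜ : Set ↥(cube d))ᶜ ∈ residual _
    have hcompl : (Subtype.val ⁻¹' (Gk k)ᶜ : Set ↥(cube d))ᶜ = Subtype.val ⁻¹' (Gk k) := by
      rw [preimage_compl, compl_compl]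
    rw [hcompl]
    refine residual_of_dense_open ((hGkopen k).preimage continuous_subtype_val) ?_
    refine Dense.mono ?_ hudense
    intro x ⟨i, hi⟩
    rw [← hi, mem_preimage]
    exact mem_iUnion.2 ⟨i, Metric.mem_ball_self (by positivity)⟩
  · exact ((MeasurableSet.iInter fun k =>
      (hGkopen k).measurableSet).compl).preimage measurable_subtype_coe
  · rw [Subtype.image_preimage_coe]
    rw [← diff_eq]
    rw [measure_diff_null hGvol]
    exact volume_cube

end Final
end Sq

/-- For `d ≥ 1` and any meager set `M ⊆ [0,1]^d`, the set of homeomorphisms `f`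
of the cube with `λ(f(M)) = 0` is comeager. Consequently (since there is a
meager set of full measure) the generic homeomorphism of the cube is singular:
there is a Borel set `F` of full measure whose image is null. -/
theorem stmt15 (d : ℕ) (hd : 1 ≤ d) (M : Set ↥(cube d)) (hM : IsMeagre M) :
    ({f : HomeoCube d |
        volume ((↑) '' (f.1 '' M) : Set (EuclideanSpace ℝ (Fin d))) = 0} ∈
      residual (HomeoCube d)) ∧
    ({f : HomeoCube d | ∃ F : Set ↥(cube d), MeasurableSet F ∧
        volume ((↑) '' F : Set (EuclideanSpace ℝ (Fin d))) = 1 ∧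
        volume ((↑) '' (f.1 '' F) : Set (EuclideanSpace ℝ (Fin d))) = 0} ∈
      residual (HomeoCube d)) := by
  constructor
  · exact Sq.part1 hd M hM
  · obtain ⟨M₀, hmg, hms, hv1⟩ := Sq.exists_full_meagre (d := d) hd
    refine Filter.mem_of_superset (Sq.part1 hd M₀ hmg) ?_
    intro f hf
    exact ⟨M₀, hms, hv1, hf⟩
end

section
/- For every nowhere dense set K ⊆ [0,1]^d and all ε, δ > 0, there exists a homeomorphism h of [0,1]^d with ‖h - id‖ < δ such that λ^d(h(K)) < ε. -/
/-!
Cut `[0,1]^d` into `N^d` grid cells of side `1/N`, with `√d / N < δ`. As `K` is nowhere dense,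
each cell `Q` has an interior point `p` off `closure K`, so `closure K` stays above some level `t`
of the gauge `g` of `Q` centred at `p`. The radial map `p + v ↦ p + g(v)^(α - 1) • v` is a
homeomorphism of `Q` fixing `∂Q` and sending the level `r` of `g` to `r^α`; with `t^α = c` it
pushes `K ∩ Q` into the shell `{c ≤ g}`, of measure `(1 - c^d) λ(Q)`. Fixing the cell boundaries,
these maps glue to a homeomorphism of the cube moving no point out of its cell, and
`λ(h(K)) ≤ 1 - c^d < ε` once `c` is close to `1`.
-/

open MeasureTheory Metric Set Filter Topology

open Bornology

section RadialRpow

variable {E : Type*} [AddCommGroup E] [Module ℝ E] {s : Set E} {α β : ℝ}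

noncomputable def radialRpow (s : Set E) (α : ℝ) (x : E) : E := gauge s x ^ (α - 1) • x

@[simp] theorem radialRpow_zero (s : Set E) (α : ℝ) : radialRpow s α 0 = 0 := smul_zero _

theorem gauge_radialRpow (s : Set E) (hα : α ≠ 0) (x : E) :
    gauge s (radialRpow s α x) = gauge s x ^ α := by
  rw [radialRpow, gauge_smul_of_nonneg (Real.rpow_nonneg (gauge_nonneg x) _), smul_eq_mul]
  rcases eq_or_ne (gauge s x) 0 with h | h
  · simp [h, Real.zero_rpow hα]
  · rw [Real.rpow_sub_one h, div_mul_cancel₀ _ h]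

theorem radialRpow_of_gauge_eq_one {x : E} (h : gauge s x = 1) (α : ℝ) : radialRpow s α x = x := by
  rw [radialRpow, h, Real.one_rpow, one_smul]

variable [TopologicalSpace E] [T1Space E]

theorem radialRpow_radialRpow (hsa : Absorbent ℝ s) (hsb : IsVonNBounded ℝ s) (hα : α ≠ 0)
    (x : E) : radialRpow s β (radialRpow s α x) = radialRpow s (α * β) x := by
  rcases eq_or_ne x 0 with rfl | hx
  · simp
  have hg : 0 < gauge s x := (gauge_pos hsa hsb).2 hx
  rw [radialRpow, gauge_radialRpow s hα, radialRpow, smul_smul, ← Real.rpow_mul hg.le,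
    ← Real.rpow_add hg, radialRpow]
  congr 2
  ring

theorem radialRpow_radialRpow_inv (hsa : Absorbent ℝ s) (hsb : IsVonNBounded ℝ s) (hα : α ≠ 0)
    (x : E) : radialRpow s α⁻¹ (radialRpow s α x) = x := by
  rw [radialRpow_radialRpow hsa hsb hα, mul_inv_cancel₀ hα, radialRpow, sub_self,
    Real.rpow_zero, one_smul]

variable [IsTopologicalAddGroup E] [ContinuousSMul ℝ E]

theorem continuous_radialRpow (hs : Convex ℝ s) (hs₀ : s ∈ 𝓝 0) (hsb : IsVonNBounded ℝ s)
    (hα : 0 < α) : Continuous (radialRpow s α) := by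
  refine continuous_iff_continuousAt.2 fun x ↦ ?_
  rcases eq_or_ne x 0 with rfl | hx
  · rw [ContinuousAt, radialRpow_zero]
    nth_rewrite 2 [← comap_gauge_nhds_zero hsb hs₀]
    simp only [tendsto_comap_iff, Function.comp_def, gauge_radialRpow s hα.ne']
    have h := ((Real.continuous_rpow_const hα.le).tendsto 0).comp (tendsto_gauge_nhds_zero hs₀)
    rwa [Real.zero_rpow hα.ne'] at h
  · have hg : gauge s x ≠ 0 := ((gauge_pos (absorbent_nhds_zero hs₀) hsb).2 hx).ne'
    exact ((continuousAt_gauge hs hs₀).rpow_const (Or.inl hg)).smul continuousAt_id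

noncomputable def radialRpowHomeomorph (hs : Convex ℝ s) (hs₀ : s ∈ 𝓝 0) (hsb : IsVonNBounded ℝ s)
    (hα : 0 < α) : E ≃ₜ E where
  toFun := radialRpow s α
  invFun := radialRpow s α⁻¹
  left_inv := radialRpow_radialRpow_inv (absorbent_nhds_zero hs₀) hsb hα.ne'
  right_inv x := by
    simpa using radialRpow_radialRpow_inv (absorbent_nhds_zero hs₀) hsb (inv_ne_zero hα.ne') x
  continuous_toFun := continuous_radialRpow hs hs₀ hsb hα
  continuous_invFun := continuous_radialRpow hs hs₀ hsb (inv_pos.2 hα)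

end RadialRpow

theorem preimage_const_add_mem_nhds_zero {G : Type*} [AddGroup G] [TopologicalSpace G]
    [IsTopologicalAddGroup G] {Q : Set G} {p : G} (hp : p ∈ interior Q) :
    (p + ·) ⁻¹' Q ∈ 𝓝 (0 : G) := by
  rw [← mem_map, map_add_left_nhds_zero]
  exact mem_interior_iff_mem_nhds.1 hp

theorem preimage_const_add_subset_closedBall {G : Type*} [SeminormedAddCommGroup G] {Q : Set G}
    {p : G} {R : ℝ} (hQR : Q ⊆ closedBall p R) : (p + ·) ⁻¹' Q ⊆ closedBall 0 R := fun v hv ↦ by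
  simpa [mem_closedBall_iff_norm] using hQR hv

section ConvexBody

variable {E : Type*} [NormedAddCommGroup E] [NormedSpace ℝ E] {Q C : Set E} {p x y : E} {c R : ℝ}

theorem mem_iff_gauge_sub_le_one (hQc : IsClosed Q) (hQ : Convex ℝ Q) (hp : p ∈ interior Q) :
    x ∈ Q ↔ gauge ((p + ·) ⁻¹' Q) (x - p) ≤ 1 := by
  rw [gauge_le_one_iff_mem_closure (hQ.translate_preimage_right p)
    (preimage_const_add_mem_nhds_zero hp), (hQc.preimage (continuous_const_add p)).closure_eq,
    mem_preimage, add_sub_cancel]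

theorem gauge_sub_eq_one_of_mem_frontier (hQ : Convex ℝ Q) (hp : p ∈ interior Q)
    (hx : x ∈ frontier Q) : gauge ((p + ·) ⁻¹' Q) (x - p) = 1 := by
  rw [gauge_eq_one_iff_mem_frontier (hQ.translate_preimage_right p)
    (preimage_const_add_mem_nhds_zero hp), ← Homeomorph.coe_addLeft,
    ← Homeomorph.preimage_frontier]
  simpa using hx

theorem gauge_sub_lt_of_mem_image_homothety (hc : 0 < c)
    (hy : y ∈ AffineMap.homothety p c '' interior Q) : gauge ((p + ·) ⁻¹' Q) (y - p) < c := by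
  obtain ⟨z, hz, rfl⟩ := hy
  have hz' : z - p ∈ interior ((p + ·) ⁻¹' Q) := by
    rw [← Homeomorph.coe_addLeft, ← Homeomorph.preimage_interior]
    simpa using hz
  rw [AffineMap.homothety_apply, vsub_eq_sub, vadd_eq_add, add_sub_cancel_right,
    gauge_smul_of_nonneg hc.le, smul_eq_mul]
  simpa using mul_lt_mul_of_pos_left (interior_subset_gauge_lt_one _ hz') hc

theorem exists_lt_gauge_sub_of_notMem (hQR : Q ⊆ closedBall p R) (hR : 0 < R)
    (hp : p ∈ interior Q) (hC : IsClosed C) (hpC : p ∉ C) :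
    ∃ t, 0 < t ∧ t < 1 ∧ ∀ x ∈ C, t < gauge ((p + ·) ⁻¹' Q) (x - p) := by
  obtain ⟨r, hr, hball⟩ := Metric.isOpen_iff.1 hC.isOpen_compl p hpC
  refine ⟨min (r / (2 * R)) (1 / 2), by positivity, by norm_num, fun x hx ↦ ?_⟩
  have hxr : r ≤ ‖x - p‖ := not_lt.1 fun h ↦ hball (mem_ball_iff_norm.2 h) hx
  have hgauge : ‖x - p‖ / R ≤ gauge ((p + ·) ⁻¹' Q) (x - p) :=
    le_gauge_of_subset_closedBall (absorbent_nhds_zero (preimage_const_add_mem_nhds_zero hp))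
      hR.le (preimage_const_add_subset_closedBall hQR)
  calc min (r / (2 * R)) (1 / 2) ≤ r / (2 * R) := min_le_left _ _
    _ < r / R := by gcongr; linarith
    _ ≤ ‖x - p‖ / R := by gcongr
    _ ≤ _ := hgauge

theorem exists_homeomorph_fix_frontier_mapsTo_sdiff_homothety (hQc : IsClosed Q)
    (hQ : Convex ℝ Q) (hQb : IsBounded Q) (hp : p ∈ interior Q) (hC : IsClosed C) (hpC : p ∉ C)
    (hc₀ : 0 < c) (hc₁ : c < 1) :
    ∃ f : E ≃ₜ E, MapsTo f Q Q ∧ MapsTo f.symm Q Q ∧ (∀ x ∈ frontier Q, f x = x) ∧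
      MapsTo f (C ∩ Q) (Q \ AffineMap.homothety p c '' interior Q) := by
  obtain ⟨R, hR, hQR⟩ := hQb.subset_closedBall_lt 0 p
  obtain ⟨t, ht₀, ht₁, htC⟩ := exists_lt_gauge_sub_of_notMem hQR hR hp hC hpC
  set s := (p + ·) ⁻¹' Q
  have hsb : IsVonNBounded ℝ s :=
    (NormedSpace.isVonNBounded_closedBall ℝ E R).subset (preimage_const_add_subset_closedBall hQR)
  -- the exponent `α` sends the gauge level `t`, below which `C` does not reach, to the level `c`
  set α := Real.logb t c
  have hα : 0 < α := Real.logb_pos_of_base_lt_one ht₀ ht₁ hc₀ hc₁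
  set g := radialRpowHomeomorph (hQ.translate_preimage_right p)
    (preimage_const_add_mem_nhds_zero hp) hsb hα
  set f := ((Homeomorph.subRight p).trans g).trans (Homeomorph.addLeft p)
  have hf : ∀ x, f x = p + radialRpow s α (x - p) := fun x ↦ rfl
  have hf_symm : ∀ x, f.symm x = p + radialRpow s α⁻¹ (x - p) := fun x ↦ by
    simp [f, g, s, radialRpowHomeomorph, Homeomorph.addLeft_symm, sub_eq_add_neg, add_comm]
  have hmaps : ∀ β, 0 < β → MapsTo (fun x ↦ p + radialRpow s β (x - p)) Q Q := fun β hβ x hx ↦ by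
    rw [mem_iff_gauge_sub_le_one hQc hQ hp] at hx ⊢
    rw [add_sub_cancel_left, gauge_radialRpow s hβ.ne']
    exact Real.rpow_le_one (gauge_nonneg _) hx hβ.le
  refine ⟨f, hmaps α hα, fun x hx ↦ hf_symm x ▸ hmaps α⁻¹ (inv_pos.2 hα) hx, fun x hx ↦ ?_,
    fun x hx ↦ ⟨hmaps α hα hx.2, ?_⟩⟩
  · rw [hf, radialRpow_of_gauge_eq_one (gauge_sub_eq_one_of_mem_frontier hQ hp hx), add_sub_cancel]
  · intro hfx
    have hlt := gauge_sub_lt_of_mem_image_homothety hc₀ hfx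
    rw [hf, add_sub_cancel_left, gauge_radialRpow s hα.ne'] at hlt
    have hc_lt := Real.rpow_lt_rpow ht₀.le (htC x hx.1) hα
    rw [Real.rpow_logb ht₀ ht₁.ne hc₀] at hc_lt
    linarith

end ConvexBody

section Shell

variable {E : Type*} [NormedAddCommGroup E] [NormedSpace ℝ E] [MeasurableSpace E] [BorelSpace E]
  [FiniteDimensional ℝ E] (μ : Measure E) [μ.IsAddHaarMeasure] {Q : Set E} {p : E} {c : ℝ}

theorem Convex.addHaar_sdiff_image_homothety_interior (hQ : Convex ℝ Q) (hp : p ∈ Q)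
    (hc₀ : 0 < c) (hc₁ : c ≤ 1) (hQμ : μ Q ≠ ⊤) :
    μ (Q \ AffineMap.homothety p c '' interior Q) =
      ENNReal.ofReal (1 - c ^ Module.finrank ℝ E) * μ Q := by
  have hsub : AffineMap.homothety p c '' interior Q ⊆ Q := by
    rintro _ ⟨z, hz, rfl⟩
    rw [AffineMap.homothety_eq_lineMap]
    exact hQ.lineMap_mem hp (interior_subset hz) ⟨hc₀.le, hc₁⟩
  have hopen := AffineMap.homothety_isOpenMap p c hc₀.ne' (interior Q) isOpen_interior
  have hint : μ (interior Q) = μ Q := measure_interior_of_null_frontier (hQ.addHaar_frontier μ)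
  rw [measure_sdiff hsub hopen.measurableSet.nullMeasurableSet
    (ne_top_of_le_ne_top hQμ (measure_mono hsub)), Measure.addHaar_image_homothety, hint,
    abs_of_pos (pow_pos hc₀ _), ENNReal.ofReal_sub _ (by positivity), ENNReal.ofReal_one,
    ENNReal.sub_mul fun _ _ ↦ hQμ, one_mul]

end Shell

section Glue

variable {X ι : Type*} [TopologicalSpace X] [Finite ι] {S : Set X} {Q : ι → Set X}

theorem exists_continuousMap_eqOn_of_closed_cover (hQ : ∀ i, IsClosed (Q i))
    (hS : ⋃ i, Q i = S) (u : ι → X → X) (hu : ∀ i, Continuous (u i))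
    (hmaps : ∀ i, MapsTo (u i) (Q i) (Q i)) (hfix : ∀ i j, i ≠ j → ∀ x ∈ Q i ∩ Q j, u i x = x) :
    ∃ F : C(S, S), ∀ i (x : S), ↑x ∈ Q i → (F x : X) = u i x := by
  have hcov : ∀ x : S, ∃ i, (x : X) ∈ Q i := fun x ↦ mem_iUnion.1 (hS ▸ x.2)
  choose c hc using hcov
  have hagree : ∀ i (x : S), ↑x ∈ Q i → u (c x) x = u i x := by
    intro i x hx
    by_cases h : c x = i
    · rw [h]
    · rw [hfix _ _ h x ⟨hc x, hx⟩, hfix _ _ (Ne.symm h) x ⟨hx, hc x⟩]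
  have hQS : ∀ i, Q i ⊆ S := fun i ↦ hS ▸ subset_iUnion Q i
  refine ⟨⟨fun x ↦ ⟨u (c x) x, hQS _ (hmaps _ (hc x))⟩, ?_⟩, hagree⟩
  refine continuous_induced_rng.2 <|
    (locallyFinite_of_finite fun i ↦ (Subtype.val ⁻¹' Q i : Set S)).continuous
      (iUnion_eq_univ_iff.2 fun x ↦ ⟨c x, hc x⟩) (fun i ↦ (hQ i).preimage continuous_subtype_val)
      fun i ↦ ((hu i).comp continuous_subtype_val).continuousOn.congr fun x hx ↦ hagree i x hx

theorem exists_homeomorph_eqOn_of_closed_cover (hQ : ∀ i, IsClosed (Q i)) (hS : ⋃ i, Q i = S)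
    (f : ι → X ≃ₜ X) (hf : ∀ i, MapsTo (f i) (Q i) (Q i))
    (hf_symm : ∀ i, MapsTo (f i).symm (Q i) (Q i))
    (hfix : ∀ i j, i ≠ j → ∀ x ∈ Q i ∩ Q j, f i x = x) :
    ∃ h : S ≃ₜ S, ∀ i (x : S), ↑x ∈ Q i → (h x : X) = f i x := by
  obtain ⟨F, hF⟩ := exists_continuousMap_eqOn_of_closed_cover hQ hS (fun i ↦ f i)
    (fun i ↦ (f i).continuous) hf hfix
  obtain ⟨G, hG⟩ := exists_continuousMap_eqOn_of_closed_cover hQ hS (fun i ↦ (f i).symm)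
    (fun i ↦ (f i).symm.continuous) hf_symm
    fun i j hij x hx ↦ (f i).symm_apply_eq.2 (hfix i j hij x hx).symm
  have hcov : ∀ x : S, ∃ i, (x : X) ∈ Q i := fun x ↦ mem_iUnion.1 (hS ▸ x.2)
  refine ⟨⟨⟨F, G, fun x ↦ ?_, fun x ↦ ?_⟩, F.continuous, G.continuous⟩, hF⟩
  · obtain ⟨i, hi⟩ := hcov x
    have hFx : (F x : X) ∈ Q i := hF i x hi ▸ hf i hi
    exact Subtype.ext (by rw [hG i _ hFx, hF i x hi, Homeomorph.symm_apply_apply])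
  · obtain ⟨i, hi⟩ := hcov x
    have hGx : (G x : X) ∈ Q i := hG i x hi ▸ hf_symm i hi
    exact Subtype.ext (by rw [hF i _ hGx, hG i x hi, Homeomorph.apply_symm_apply])

end Glue

theorem exists_fin_mem_Icc_div {N : ℕ} {t : ℝ} (hN : 0 < N) (ht : t ∈ Icc (0 : ℝ) 1) :
    ∃ k : Fin N, t ∈ Icc ((k : ℝ) / N) ((k + 1) / N) := by
  have hN' : (0 : ℝ) < N := Nat.cast_pos.2 hN
  rcases ht.2.lt_or_eq with ht1 | rfl
  · have hk : ⌊t * N⌋₊ < N := (Nat.floor_lt (mul_nonneg ht.1 hN'.le)).2 (by nlinarith [ht.1])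
    refine ⟨⟨⌊t * N⌋₊, hk⟩, ?_, ?_⟩
    · rw [div_le_iff₀ hN']
      exact Nat.floor_le (mul_nonneg ht.1 hN'.le)
    · rw [le_div_iff₀ hN']
      exact (Nat.lt_floor_add_one _).le
  · refine ⟨⟨N - 1, Nat.sub_lt hN one_pos⟩, ?_, ?_⟩ <;>
      simp [Nat.cast_sub (Nat.one_le_of_lt hN), div_le_one hN', le_div_iff₀ hN']

section Grid

variable {ι : Type*} {a b : ι → ℝ} {N : ℕ}

def box (a b : ι → ℝ) : Set (EuclideanSpace ℝ ι) := {x | ∀ i, x i ∈ Icc (a i) (b i)}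

theorem box_eq_preimage (a b : ι → ℝ) :
    box a b = WithLp.ofLp ⁻¹' univ.pi fun i ↦ Icc (a i) (b i) := by
  ext x
  simp only [box, mem_ofPred_eq, mem_preimage, mem_univ_pi]

theorem isClosed_box : IsClosed (box a b) := by
  rw [box_eq_preimage]
  exact (isClosed_set_pi fun i _ ↦ isClosed_Icc).preimage (PiLp.continuous_ofLp 2 _)

theorem convex_box : Convex ℝ (box a b) := by
  rw [box_eq_preimage]
  exact (convex_pi fun i _ ↦ convex_Icc _ _).linear_preimage
    (PiLp.continuousLinearEquiv 2 ℝ fun _ : ι ↦ ℝ).toLinearMap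

def gridCell (N : ℕ) (m : ι → Fin N) : Set (EuclideanSpace ℝ ι) :=
  box (fun i ↦ m i / N) (fun i ↦ (m i + 1) / N)

theorem gridCell_subset_box (m : ι → Fin N) : gridCell N m ⊆ box 0 1 := fun x hx i ↦ by
  have hN : (0 : ℝ) < N := Nat.cast_pos.2 (Fin.pos (m i))
  have hm : (m i : ℝ) + 1 ≤ N := by exact_mod_cast (m i).isLt
  exact ⟨(div_nonneg (Nat.cast_nonneg _) hN.le).trans (hx i).1,
    (hx i).2.trans ((div_le_one hN).2 hm)⟩

theorem iUnion_gridCell (hN : 0 < N) :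
    ⋃ m, gridCell N m = (box 0 1 : Set (EuclideanSpace ℝ ι)) := by
  refine (iUnion_subset gridCell_subset_box).antisymm fun x hx ↦ ?_
  choose m hm using fun i ↦ exists_fin_mem_Icc_div hN (hx i)
  exact mem_iUnion.2 ⟨m, hm⟩

variable [Fintype ι] {x y : EuclideanSpace ℝ ι}

theorem interior_box : interior (box a b) = {x | ∀ i, x i ∈ Ioo (a i) (b i)} := by
  rw [box_eq_preimage, show (WithLp.ofLp : EuclideanSpace ℝ ι → ι → ℝ) =
    PiLp.homeomorph 2 fun _ : ι ↦ ℝ from rfl, ← Homeomorph.preimage_interior,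
    interior_pi_set finite_univ]
  ext x
  simp

theorem volume_box (a b : ι → ℝ) : volume (box a b) = ∏ i, ENNReal.ofReal (b i - a i) := by
  rw [box_eq_preimage, (PiLp.volume_preserving_ofLp ι).measure_preimage
    (MeasurableSet.univ_pi fun _ ↦ measurableSet_Icc).nullMeasurableSet, pi_univ_Icc,
    Real.volume_Icc_pi]

theorem dist_le_of_mem_box (hx : x ∈ box a b) (hy : y ∈ box a b) :
    dist x y ≤ √(∑ i, (b i - a i) ^ 2) := by
  rw [EuclideanSpace.dist_eq]
  gcongr with i
  exact Real.dist_le_of_mem_Icc (hx i) (hy i)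

theorem isBounded_box : IsBounded (box a b) :=
  Metric.isBounded_iff.2 ⟨_, fun _ hx _ hy ↦ dist_le_of_mem_box hx hy⟩

theorem gridCell_inter_subset_frontier {m m' : ι → Fin N} (h : m ≠ m') :
    gridCell N m ∩ gridCell N m' ⊆ frontier (gridCell N m) := by
  rintro x ⟨hx, hx'⟩
  unfold gridCell at *
  rw [isClosed_box.frontier_eq, interior_box]
  refine ⟨hx, fun hint ↦ h (funext fun i ↦ Fin.ext ?_)⟩
  have hN : (0 : ℝ) < N := Nat.cast_pos.2 (Fin.pos (m i))
  have h₁ : (m i : ℝ) < m' i + 1 :=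
    (div_lt_div_iff_of_pos_right hN).1 ((hint i).1.trans_le (hx' i).2)
  have h₂ : (m' i : ℝ) < m i + 1 :=
    (div_lt_div_iff_of_pos_right hN).1 ((hx' i).1.trans_lt (hint i).2)
  norm_cast at h₁ h₂
  omega

theorem nonempty_interior_gridCell (hN : 0 < N) (m : ι → Fin N) :
    (interior (gridCell N m)).Nonempty := by
  have hN' : (0 : ℝ) < N := Nat.cast_pos.2 hN
  refine ⟨WithLp.toLp 2 fun i ↦ (m i + 1 / 2) / N, ?_⟩
  rw [gridCell, interior_box]
  intro i
  simp only [mem_Ioo]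
  constructor <;> gcongr <;> linarith

theorem volume_gridCell (m : ι → Fin N) :
    volume (gridCell N m) = ENNReal.ofReal (1 / N) ^ Fintype.card ι := by
  simp [gridCell, volume_box, add_div]

theorem sum_volume_gridCell [DecidableEq ι] (hN : 0 < N) :
    ∑ m : ι → Fin N, volume (gridCell N m) = 1 := by
  have hN' : (0 : ℝ) < N := Nat.cast_pos.2 hN
  simp only [volume_gridCell, Finset.sum_const, Finset.card_univ, Fintype.card_fun,
    Fintype.card_fin, nsmul_eq_mul, Nat.cast_pow]
  rw [← mul_pow, ← ENNReal.ofReal_natCast, ← ENNReal.ofReal_mul hN'.le,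
    mul_one_div_cancel hN'.ne', ENNReal.ofReal_one, one_pow]

theorem dist_le_of_mem_gridCell {m : ι → Fin N} (hx : x ∈ gridCell N m)
    (hy : y ∈ gridCell N m) : dist x y ≤ √(Fintype.card ι) / N := by
  refine (dist_le_of_mem_box hx hy).trans_eq ?_
  simp [add_div, ← div_eq_mul_inv]

theorem volume_iUnion_gridCell_sdiff_image_homothety_le [DecidableEq ι] (hN : 0 < N)
    {p : (ι → Fin N) → EuclideanSpace ℝ ι} (hp : ∀ m, p m ∈ gridCell N m) {c : ℝ} (hc₀ : 0 < c)
    (hc₁ : c ≤ 1) :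
    volume (⋃ m, gridCell N m \ AffineMap.homothety (p m) c '' interior (gridCell N m)) ≤
      ENNReal.ofReal (1 - c ^ Fintype.card ι) :=
  calc _ ≤ ∑ m, volume (gridCell N m \ AffineMap.homothety (p m) c '' interior (gridCell N m)) :=
        measure_iUnion_fintype_le _ _
    _ = ∑ m, ENNReal.ofReal (1 - c ^ Fintype.card ι) * volume (gridCell N m) := by
        congr! with m
        simpa using convex_box.addHaar_sdiff_image_homothety_interior volume (hp m) hc₀ hc₁
          isBounded_box.measure_lt_top.ne
    _ = _ := by rw [← Finset.mul_sum, sum_volume_gridCell hN, mul_one]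

end Grid

theorem exists_one_sub_pow_lt {ε : ℝ} (hε : 0 < ε) (n : ℕ) :
    ∃ c : ℝ, 0 < c ∧ c < 1 ∧ 1 - c ^ n < ε := by
  have hpow : ∀ᶠ c in 𝓝 (1 : ℝ), 1 - ε < c ^ n :=
    continuousAt_const.eventually_lt (continuous_pow n).continuousAt (by simpa using hε)
  obtain ⟨c, ⟨hc₀, hcε⟩, hc₁⟩ :=
    (((lt_mem_nhds one_pos).and hpow).filter_mono nhdsWithin_le_nhds |>.and
      (self_mem_nhdsWithin (s := Iio (1 : ℝ)))).exists
  exact ⟨c, hc₀, hc₁, by linarith⟩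

/-- For every nowhere dense set `K ⊆ [0,1]^d` and all `ε, δ > 0` there is a
homeomorphism `h` of the cube within uniform distance `δ` of the identity such
that `λ(h(K)) < ε`. -/
theorem stmt16 (d : ℕ) (K : Set ↥(cube d)) (hK : IsNowhereDense K)
    (ε δ : ℝ) (hε : 0 < ε) (hδ : 0 < δ) :
    ∃ h : ↥(cube d) ≃ₜ ↥(cube d), (∀ x : ↥(cube d), dist (h x) x < δ) ∧
      volume ((↑) '' (h '' K) : Set (EuclideanSpace ℝ (Fin d))) <
        ENNReal.ofReal ε := by
  obtain ⟨N, hNδ⟩ := exists_nat_gt (√d / δ)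
  have hN : 0 < N := Nat.cast_pos.1 ((div_nonneg (Real.sqrt_nonneg _) hδ.le).trans_lt hNδ)
  obtain ⟨c, hc₀, hc₁, hcε⟩ := exists_one_sub_pow_lt hε d
  set C := closure ((↑) '' K : Set (EuclideanSpace ℝ (Fin d)))
  choose p hp using fun m ↦ (interior_eq_empty_iff_dense_compl.1 hK.image_val).inter_open_nonempty
    _ isOpen_interior (nonempty_interior_gridCell hN m)
  choose f hfQ hf_symmQ hfix hfC using fun m ↦
    exists_homeomorph_fix_frontier_mapsTo_sdiff_homothety isClosed_box convex_box isBounded_box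
      (hp m).1 isClosed_closure (hp m).2 hc₀ hc₁
  have hS : ⋃ m, gridCell N m = cube d := iUnion_gridCell hN
  obtain ⟨h, hh⟩ := exists_homeomorph_eqOn_of_closed_cover (fun m ↦ isClosed_box) hS f hfQ
    hf_symmQ fun m m' hmm' x hx ↦ hfix m x (gridCell_inter_subset_frontier hmm' hx)
  have hcell : ∀ x : cube d, ∃ m, (x : EuclideanSpace ℝ (Fin d)) ∈ gridCell N m :=
    fun x ↦ mem_iUnion.1 (hS.ge x.2)
  refine ⟨h, fun x ↦ ?_, ?_⟩
  · obtain ⟨m, hm⟩ := hcell x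
    calc dist (h x) x = dist (f m x) x := by rw [Subtype.dist_eq, hh m x hm]
      _ ≤ √d / N := by simpa using dist_le_of_mem_gridCell (hfQ m hm) hm
      _ < δ := (div_lt_comm₀ (Nat.cast_pos.2 hN) hδ).2 hNδ
  calc volume ((↑) '' (h '' K) : Set (EuclideanSpace ℝ (Fin d)))
      ≤ volume (⋃ m, gridCell N m \ AffineMap.homothety (p m) c '' interior (gridCell N m)) := by
        refine measure_mono ?_
        rintro _ ⟨_, ⟨x, hxK, rfl⟩, rfl⟩
        obtain ⟨m, hm⟩ := hcell x
        exact mem_iUnion.2 ⟨m, hh m x hm ▸ hfC m ⟨subset_closure (mem_image_of_mem _ hxK), hm⟩⟩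
    _ ≤ ENNReal.ofReal (1 - c ^ d) := by
        simpa using volume_iUnion_gridCell_sdiff_image_homothety_le hN
          (fun m ↦ interior_subset (hp m).1) hc₀ hc₁.le
    _ < ENNReal.ofReal ε := (ENNReal.ofReal_lt_ofReal_iff hε).2 hcε
end

section
/- For every homeomorphism g of [0,1]^d there exists a Borel set R ⊆ [0,1]^d with λ^d(R) = 1 such that for every subset N ⊆ R with λ^d(N) = 0, one has λ^d(g(N)) = 0. -/
/-!
Pull Lebesgue measure back along `g`, i.e. `ν s = λ (g '' s)`, a finite measure on the cube.
Its singular part with respect to `λ` lives on a `λ`-null set; on the complement `R` of that set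
`ν` is absolutely continuous with respect to `λ`, which says exactly that `g` maps `λ`-null
subsets of `R` to `λ`-null sets.
-/

open MeasureTheory Metric Set Filter Topology

namespace MeasureTheory.Measure

variable {α : Type*} [MeasurableSpace α]

theorem exists_compl_null_restrict_absolutelyContinuous (μ ν : Measure α)
    [ν.HaveLebesgueDecomposition μ] :
    ∃ S, MeasurableSet S ∧ μ Sᶜ = 0 ∧ ν.restrict S ≪ μ := by
  obtain ⟨S, hS, hνS, hμS⟩ := mutuallySingular_singularPart ν μ
  refine ⟨S, hS, hμS, ?_⟩
  rw [haveLebesgueDecomposition_add ν μ, restrict_add, restrict_eq_zero.2 hνS, zero_add]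
  exact restrict_le_self.absolutelyContinuous.trans (withDensity_absolutelyContinuous _ _)

end MeasureTheory.Measure

theorem MeasurableEmbedding.exists_compl_null_image_null_of_null {α β : Type*}
    [MeasurableSpace α] [MeasurableSpace β] {e : α → β} (he : MeasurableEmbedding e)
    (μ : Measure α) (ν : Measure β) [SigmaFinite μ] [IsFiniteMeasure ν] :
    ∃ S, MeasurableSet S ∧ μ Sᶜ = 0 ∧ ∀ N ⊆ S, μ N = 0 → ν (e '' N) = 0 := by
  obtain ⟨S, hS, hSc, hac⟩ :=
    Measure.exists_compl_null_restrict_absolutelyContinuous μ (ν.comap e)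
  refine ⟨S, hS, hSc, fun N hNS hN => ?_⟩
  rw [← he.comap_apply, ← inter_eq_left.2 hNS, ← Measure.restrict_apply' hS]
  exact hac hN

theorem cube_eq_preimage_ofLp (d : ℕ) :
    cube d = WithLp.ofLp ⁻¹' Set.pi univ fun _ : Fin d => Icc (0 : ℝ) 1 := by
  ext x
  simp only [mem_preimage, mem_univ_pi]
  rfl

theorem measurableSet_cube (d : ℕ) : MeasurableSet (cube d) := by
  rw [cube_eq_preimage_ofLp]
  exact (MeasurableSet.univ_pi fun _ => measurableSet_Icc).preimage
    (PiLp.volume_preserving_ofLp _).measurable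

theorem volume_cube (d : ℕ) : volume (cube d) = 1 := by
  rw [cube_eq_preimage_ofLp, (PiLp.volume_preserving_ofLp _).measure_preimage
    (MeasurableSet.univ_pi fun _ => measurableSet_Icc).nullMeasurableSet, volume_pi_pi]
  simp

/-- For every homeomorphism `g` of `[0,1]^d` there is a Borel set `R ⊆ [0,1]^d`
of full Lebesgue measure such that `g` maps every Lebesgue null subset of `R`
to a Lebesgue null set. -/
theorem stmt17 (d : ℕ) (g : ↥(cube d) ≃ₜ ↥(cube d)) :
    ∃ R : Set ↥(cube d), MeasurableSet R ∧
      volume ((↑) '' R : Set (EuclideanSpace ℝ (Fin d))) = 1 ∧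
      ∀ N : Set ↥(cube d), N ⊆ R →
        volume ((↑) '' N : Set (EuclideanSpace ℝ (Fin d))) = 0 →
        volume ((↑) '' (g '' N) : Set (EuclideanSpace ℝ (Fin d))) = 0 := by
  set μ : Measure (cube d) := volume.comap Subtype.val
  have hμ : ∀ s, μ s = volume ((↑) '' s : Set (EuclideanSpace ℝ (Fin d))) :=
    (MeasurableEmbedding.subtype_coe (measurableSet_cube d)).comap_apply volume
  have hμ_univ : μ univ = 1 := by rw [hμ, image_univ, Subtype.range_coe, volume_cube]
  have : IsFiniteMeasure μ := ⟨by simp [hμ_univ]⟩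
  obtain ⟨R, hR, hRc, hnull⟩ := g.measurableEmbedding.exists_compl_null_image_null_of_null μ μ
  refine ⟨R, hR, ?_, fun N hNR hN => ?_⟩
  · rw [← hμ, ← hμ_univ]
    exact measure_congr (ae_eq_univ.2 hRc)
  · rw [← hμ] at hN ⊢
    exact hnull N hNR hN
end

section
/- Let f be an increasing homeomorphism of [0,1] and suppose that for each n there is a partition 0 = a₀ⁿ < ... < a_{kₙ}ⁿ = 1 with mesh less than 1/n whose inscribed polygonal length ℓₙ = Σᵢ |(aᵢⁿ - aᵢ₋₁ⁿ, f(aᵢⁿ) - f(aᵢ₋₁ⁿ))| satisfies ℓₙ ≥ 2 - 2^{-n}. Let Sₙ be the union of those open partition intervals (aᵢ₋₁ⁿ, aᵢⁿ) on which the difference quotient (f(aᵢⁿ) - f(aᵢ₋₁ⁿ))/(aᵢⁿ - aᵢ₋₁ⁿ) is at most 1/n. Then λ(Sₙ) ≥ 1 - (n+1)·2^{-n}; in particular λ(Sₙ) → 1. -/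
open MeasureTheory Set Filter Topology

lemma telescope' {m : ℕ} (g : Fin (m + 1) → ℝ) :
    ∑ i : Fin m, (g i.succ - g i.castSucc) = g (Fin.last m) - g 0 := by
  induction m with
  | zero => simp
  | succ m ih =>
    rw [Fin.sum_univ_castSucc]
    have h := ih (fun j => g j.castSucc)
    simp only [← Fin.succ_castSucc] at h
    rw [h]
    simp [Fin.succ_last]

lemma keyineq' {b c N : ℝ} (hb : 0 < b) (hc : 0 < c) (hN : 1 ≤ N)
    (hbc : b ≤ N * c) :
    b / (N + 1) ≤ b + c - Real.sqrt (b ^ 2 + c ^ 2) := by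
  have hN0 : (0:ℝ) < N + 1 := by linarith
  set d := b / (N + 1) with hd_def
  have hd : d * (N + 1) = b := div_mul_cancel₀ b (ne_of_gt hN0)
  have hd0 : 0 < d := div_pos hb hN0
  have h2 : 0 ≤ b + c - d := by nlinarith
  have h1 : Real.sqrt (b ^ 2 + c ^ 2) ≤ b + c - d := by
    rw [show b + c - d = Real.sqrt ((b + c - d) ^ 2) from (Real.sqrt_sq h2).symm]
    apply Real.sqrt_le_sqrt
    have h3 : d * b ≤ d * (N * c) := by nlinarith
    nlinarith [sq_nonneg d]
  linarith


/-- Let `f` be an increasing homeomorphism of `[0,1]` and, for each `n ≥ 1`, a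
partition of `[0,1]` of mesh `< 1/n` whose inscribed polygonal length is at
least `2 - 2^{-n}`. Let `Sₙ` be the union of the open partition intervals on
which the difference quotient of `f` is at most `1/n`. Then
`λ(Sₙ) ≥ 1 - (n+1)·2^{-n}`; in particular `λ(Sₙ) → 1`. -/
theorem stmt18 (f : ℝ → ℝ) (hc : ContinuousOn f (Icc 0 1))
    (hm : StrictMonoOn f (Icc 0 1)) (h0 : f 0 = 0) (h1 : f 1 = 1)
    (k : ℕ → ℕ) (a : (n : ℕ) → Fin (k n + 1) → ℝ)
    (hmono : ∀ n, StrictMono (a n)) (ha0 : ∀ n, a n 0 = 0)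
    (ha1 : ∀ n, a n (Fin.last (k n)) = 1)
    (hmesh : ∀ n, 1 ≤ n → ∀ i : Fin (k n),
      a n i.succ - a n i.castSucc < 1 / (n : ℝ))
    (hlen : ∀ n, 1 ≤ n →
      2 - 2⁻¹ ^ n ≤ ∑ i : Fin (k n), Real.sqrt ((a n i.succ - a n i.castSucc) ^ 2 +
        (f (a n i.succ) - f (a n i.castSucc)) ^ 2)) :
    (∀ n : ℕ, 1 ≤ n →
      ENNReal.ofReal (1 - ((n : ℝ) + 1) * 2⁻¹ ^ n) ≤
        volume (⋃ (i : Fin (k n)) (_ : (f (a n i.succ) - f (a n i.castSucc)) /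
            (a n i.succ - a n i.castSucc) ≤ 1 / (n : ℝ)),
          Ioo (a n i.castSucc) (a n i.succ))) ∧
    Tendsto (fun n : ℕ =>
        volume (⋃ (i : Fin (k n)) (_ : (f (a n i.succ) - f (a n i.castSucc)) /
            (a n i.succ - a n i.castSucc) ≤ 1 / (n : ℝ)),
          Ioo (a n i.castSucc) (a n i.succ)))
      atTop (𝓝 1) := by
  classical
  have haIcc : ∀ n (j : Fin (k n + 1)), a n j ∈ Icc (0:ℝ) 1 := by
    intro n j
    constructor
    · rw [← ha0 n]; exact (hmono n).monotone (Fin.zero_le j)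
    · rw [← ha1 n]; exact (hmono n).monotone (Fin.le_last j)
  have hb : ∀ n (i : Fin (k n)), 0 < a n i.succ - a n i.castSucc :=
    fun n i => sub_pos.2 (hmono n Fin.castSucc_lt_succ)
  have hcpos : ∀ n (i : Fin (k n)), 0 < f (a n i.succ) - f (a n i.castSucc) :=
    fun n i => sub_pos.2 (hm (haIcc n _) (haIcc n _) (hmono n Fin.castSucc_lt_succ))
  have hsumb : ∀ n, ∑ i : Fin (k n), (a n i.succ - a n i.castSucc) = 1 := by
    intro n; rw [telescope' (a n), ha1, ha0]; ring
  have hsumc : ∀ n, ∑ i : Fin (k n), (f (a n i.succ) - f (a n i.castSucc)) = 1 := by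
    intro n; rw [telescope' (fun j => f (a n j)), ha1, ha0, h0, h1]; ring
  have hub : ∀ n : ℕ,
      volume (⋃ (i : Fin (k n)) (_ : (f (a n i.succ) - f (a n i.castSucc)) /
            (a n i.succ - a n i.castSucc) ≤ 1 / (n : ℝ)),
          Ioo (a n i.castSucc) (a n i.succ)) ≤ 1 := by
    intro n
    have hsub : (⋃ (i : Fin (k n)) (_ : (f (a n i.succ) - f (a n i.castSucc)) /
            (a n i.succ - a n i.castSucc) ≤ 1 / (n : ℝ)),
          Ioo (a n i.castSucc) (a n i.succ)) ⊆ Icc (0:ℝ) 1 := by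
      refine iUnion_subset fun i => iUnion_subset fun _ => ?_
      exact (Ioo_subset_Icc_self).trans (Icc_subset_Icc (haIcc n _).1 (haIcc n _).2)
    calc volume _ ≤ volume (Icc (0:ℝ) 1) := measure_mono hsub
      _ = 1 := by simp [Real.volume_Icc]
  have key : ∀ n : ℕ, 1 ≤ n →
      ENNReal.ofReal (1 - ((n : ℝ) + 1) * 2⁻¹ ^ n) ≤
        volume (⋃ (i : Fin (k n)) (_ : (f (a n i.succ) - f (a n i.castSucc)) /
            (a n i.succ - a n i.castSucc) ≤ 1 / (n : ℝ)),
          Ioo (a n i.castSucc) (a n i.succ)) := by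
    intro n hn
    have hN : (1:ℝ) ≤ (n:ℝ) := by exact_mod_cast hn
    have hN0 : (0:ℝ) < (n:ℝ) := by linarith
    set P : Fin (k n) → Prop := fun i =>
      (f (a n i.succ) - f (a n i.castSucc)) / (a n i.succ - a n i.castSucc) ≤ 1 / (n:ℝ)
      with hP
    set G : Finset (Fin (k n)) := Finset.univ.filter P with hG
    have hSeq : (⋃ (i : Fin (k n)) (_ : (f (a n i.succ) - f (a n i.castSucc)) /
            (a n i.succ - a n i.castSucc) ≤ 1 / (n : ℝ)),
          Ioo (a n i.castSucc) (a n i.succ))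
        = ⋃ i ∈ G, Ioo (a n i.castSucc) (a n i.succ) := by
      ext x; simp [hG, hP]
    have hdisj : (↑G : Set (Fin (k n))).PairwiseDisjoint
        (fun i => Ioo (a n i.castSucc) (a n i.succ)) := by
      intro i _ j _ hij
      have hord : ∀ p q : Fin (k n), p < q →
          Disjoint (Ioo (a n p.castSucc) (a n p.succ)) (Ioo (a n q.castSucc) (a n q.succ)) := by
        intro p q hpq
        rw [Set.Ioo_disjoint_Ioo]
        have hle : a n p.succ ≤ a n q.castSucc :=
          (hmono n).monotone (Fin.succ_le_castSucc_iff.2 hpq)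
        exact (min_le_left _ _).trans (hle.trans (le_max_right _ _))
      rcases hij.lt_or_gt with h | h
      · exact hord i j h
      · exact (hord j i h).symm
    rw [hSeq, measure_biUnion_finset hdisj (fun i _ => measurableSet_Ioo)]
    simp only [Real.volume_Ioo]
    rw [← ENNReal.ofReal_sum_of_nonneg (fun i _ => (hb n i).le)]
    apply ENNReal.ofReal_le_ofReal
    -- now a real inequality
    have hslack : ∑ i : Fin (k n),
        ((a n i.succ - a n i.castSucc) + (f (a n i.succ) - f (a n i.castSucc))
          - Real.sqrt ((a n i.succ - a n i.castSucc) ^ 2 +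
              (f (a n i.succ) - f (a n i.castSucc)) ^ 2)) ≤ 2⁻¹ ^ n := by
      have h := hlen n hn
      rw [Finset.sum_sub_distrib, Finset.sum_add_distrib, hsumb n, hsumc n]
      linarith
    have hterm : ∀ i : Fin (k n), 0 ≤
        (a n i.succ - a n i.castSucc) + (f (a n i.succ) - f (a n i.castSucc))
          - Real.sqrt ((a n i.succ - a n i.castSucc) ^ 2 +
              (f (a n i.succ) - f (a n i.castSucc)) ^ 2) := by
      intro i
      have h1 : Real.sqrt ((a n i.succ - a n i.castSucc) ^ 2 +
          (f (a n i.succ) - f (a n i.castSucc)) ^ 2)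
          ≤ (a n i.succ - a n i.castSucc) + (f (a n i.succ) - f (a n i.castSucc)) := by
        rw [show (a n i.succ - a n i.castSucc) + (f (a n i.succ) - f (a n i.castSucc)) =
            Real.sqrt (((a n i.succ - a n i.castSucc) + (f (a n i.succ) - f (a n i.castSucc)))^2)
            from (Real.sqrt_sq (by nlinarith [hb n i, hcpos n i])).symm]
        apply Real.sqrt_le_sqrt
        nlinarith [hb n i, hcpos n i]
      linarith
    set B : Finset (Fin (k n)) := Finset.univ.filter (fun i => ¬ P i) with hB
    have hbadkey : ∀ i ∈ B, (a n i.succ - a n i.castSucc) / ((n:ℝ) + 1) ≤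
        (a n i.succ - a n i.castSucc) + (f (a n i.succ) - f (a n i.castSucc))
          - Real.sqrt ((a n i.succ - a n i.castSucc) ^ 2 +
              (f (a n i.succ) - f (a n i.castSucc)) ^ 2) := by
      intro i hi
      rw [hB, Finset.mem_filter] at hi
      have hi2 : 1 / (n:ℝ) < (f (a n i.succ) - f (a n i.castSucc)) /
          (a n i.succ - a n i.castSucc) := not_le.1 hi.2
      rw [div_lt_div_iff₀ hN0 (hb n i)] at hi2
      exact keyineq' (hb n i) (hcpos n i) hN (by nlinarith)
    have hBsum : ∑ i ∈ B, (a n i.succ - a n i.castSucc) ≤ ((n:ℝ) + 1) * 2⁻¹ ^ n := by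
      have h1 : ∑ i ∈ B, (a n i.succ - a n i.castSucc) / ((n:ℝ) + 1) ≤ 2⁻¹ ^ n := by
        calc ∑ i ∈ B, (a n i.succ - a n i.castSucc) / ((n:ℝ) + 1)
            ≤ ∑ i ∈ B, ((a n i.succ - a n i.castSucc) + (f (a n i.succ) - f (a n i.castSucc))
              - Real.sqrt ((a n i.succ - a n i.castSucc) ^ 2 +
                  (f (a n i.succ) - f (a n i.castSucc)) ^ 2)) :=
              Finset.sum_le_sum hbadkey
          _ ≤ ∑ i : Fin (k n), ((a n i.succ - a n i.castSucc) + (f (a n i.succ) - f (a n i.castSucc))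
              - Real.sqrt ((a n i.succ - a n i.castSucc) ^ 2 +
                  (f (a n i.succ) - f (a n i.castSucc)) ^ 2)) :=
              Finset.sum_le_sum_of_subset_of_nonneg (Finset.subset_univ _)
                (fun i _ _ => hterm i)
          _ ≤ 2⁻¹ ^ n := hslack
      rw [← Finset.sum_div, div_le_iff₀ (by linarith : (0:ℝ) < (n:ℝ) + 1)] at h1
      linarith
    have hsplit := Finset.sum_filter_add_sum_filter_not Finset.univ P
      (fun i => a n i.succ - a n i.castSucc)
    have := hsumb n
    rw [← hsplit] at this
    rw [← hG, ← hB] at this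
    linarith
  refine ⟨key, ?_⟩
  have hlow : Tendsto (fun n : ℕ => ENNReal.ofReal (1 - ((n:ℝ) + 1) * 2⁻¹ ^ n)) atTop (𝓝 1) := by
    have h1 : Tendsto (fun n : ℕ => ((n:ℝ) + 1) * 2⁻¹ ^ n) atTop (𝓝 0) := by
      have hA := tendsto_pow_const_mul_const_pow_of_abs_lt_one 1
        (r := (2:ℝ)⁻¹) (by rw [abs_of_pos]; norm_num; norm_num)
      have hB := tendsto_pow_atTop_nhds_zero_of_lt_one
        (by norm_num : (0:ℝ) ≤ 2⁻¹) (by norm_num : (2:ℝ)⁻¹ < 1)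
      have := hA.add hB
      simpa [pow_one, add_mul] using this
    have h2 : Tendsto (fun n : ℕ => 1 - ((n:ℝ) + 1) * 2⁻¹ ^ n) atTop (𝓝 1) := by
      have := tendsto_const_nhds (x := (1:ℝ)) (f := atTop (α := ℕ)) |>.sub h1
      simpa using this
    have h3 := (ENNReal.continuous_ofReal.tendsto 1).comp h2
    simpa [Function.comp_def] using h3
  apply tendsto_of_tendsto_of_tendsto_of_le_of_le' hlow tendsto_const_nhds
  · filter_upwards [eventually_ge_atTop 1] with n hn using key n hn
  · filter_upwards with n using hub n
end
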